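/- arXiv:2510.07746 — 4 statements merged into one kernel-verified Lean document; each statement's English description precedes it below -/
import Mathlib

section
/- Fix any n > 2 and an n-point dataset X = {x_1,…,x_n} ⊂ ℝ^{n−1}. There exists a well-defined continuous function g : [0,1] → (ℝ^{n−1})ⁿ such that for every C ∈ [0,1], the dataset g(C) satisfies ‖g(C)_i − g(C)_j‖² = (1−C)·‖x_i − x_j‖² + C for all i ≠ j, and for every perplexity ρ ∈ (1, n−1) and every C ∈ [0,1), TSNE_ρ(X) = TSNE_ρ(g(C)). -/
open scoped BigOperators RealInnerProductSpace
noncomputable section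

namespace TSNEPaper

variable {n k : ℕ} {E F : Type*}

/-- The set of nearest neighbors of point `i` (used for the `σ = 0` limit of the
conditional affinity). -/
def nearestSet [NormedAddCommGroup E] (X : Fin n → E) (i : Fin n) : Finset (Fin n) :=
  (Finset.univ.erase i).filter fun j => ∀ l ∈ Finset.univ.erase i, ‖X i - X j‖ ≤ ‖X i - X l‖

/-- Conditional t-SNE affinity `P_{j|i}(X; σ)`.  For `σ = 0` we take the limiting value
as `σ → 0⁺`, which puts equal mass on the nearest neighbors of `i`. -/
def condAffinity [NormedAddCommGroup E] (X : Fin n → E) (σ : ℝ) (i j : Fin n) : ℝ :=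
  if j = i then 0
  else if σ = 0 then (if j ∈ nearestSet X i then ((nearestSet X i).card : ℝ)⁻¹ else 0)
  else Real.exp (-‖X i - X j‖ ^ 2 / (2 * σ ^ 2)) /
      ∑ l ∈ Finset.univ.erase i, Real.exp (-‖X i - X l‖ ^ 2 / (2 * σ ^ 2))

/-- Base-2 Shannon entropy of a distribution on `Fin n`. -/
def entropy2 (p : Fin n → ℝ) : ℝ := -∑ j, p j * Real.logb 2 (p j)

/-- `σ` is a perplexity-`ρ`-calibrated bandwidth for point `i`: it is nonnegative and
minimizes the gap between the entropy of `P_{·|i}(X;σ)` and `log₂ ρ`. -/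
def IsCalibrated [NormedAddCommGroup E] (X : Fin n → E) (ρ : ℝ) (i : Fin n) (σ : ℝ) : Prop :=
  0 ≤ σ ∧ ∀ σ' : ℝ, 0 ≤ σ' →
    |entropy2 (condAffinity X σ i) - Real.logb 2 ρ| ≤
      |entropy2 (condAffinity X σ' i) - Real.logb 2 ρ|

/-- The calibrated bandwidth `σ_i^*` (well defined by uniqueness of the minimizer). -/
def sigmaStar [NormedAddCommGroup E] (X : Fin n → E) (ρ : ℝ) (i : Fin n) : ℝ :=
  Classical.epsilon (IsCalibrated X ρ i)

/-- Symmetrized input affinity `P_{ij}(X)`. -/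
def inAffinity [NormedAddCommGroup E] (X : Fin n → E) (ρ : ℝ) (i j : Fin n) : ℝ :=
  if i = j then 0
  else (condAffinity X (sigmaStar X ρ j) j i + condAffinity X (sigmaStar X ρ i) i j) / (2 * n)

/-- Output affinity `Q_{ij}(Y)`. -/
def outAffinity [NormedAddCommGroup F] (Y : Fin n → F) (i j : Fin n) : ℝ :=
  if i = j then 0
  else (1 + ‖Y i - Y j‖ ^ 2)⁻¹ /
    ∑ p ∈ Finset.univ.offDiag, (1 + ‖Y p.1 - Y p.2‖ ^ 2)⁻¹

/-- The t-SNE loss `L_X(Y) = KL(P(X) ‖ Q(Y))`. -/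
def tsneLoss {d : ℕ} [NormedAddCommGroup E] (X : Fin n → E) (ρ : ℝ)
    (Y : Fin n → EuclideanSpace ℝ (Fin d)) : ℝ :=
  ∑ p ∈ Finset.univ.offDiag,
    inAffinity X ρ p.1 p.2 * Real.log (inAffinity X ρ p.1 p.2 / outAffinity Y p.1 p.2)

/-- The set of stationary t-SNE outputs in `ℝ^d` for input `X` and perplexity `ρ`. -/
def TSNE [NormedAddCommGroup E] (d : ℕ) (ρ : ℝ) (X : Fin n → E) :
    Set (Fin n → EuclideanSpace ℝ (Fin d)) :=
  {Y : Fin n → EuclideanSpace ℝ (Fin d) | fderiv ℝ (tsneLoss X ρ) Y = 0}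

/-- The image of t-SNE: all stationary outputs over all `n`-point inputs in `ℝ^{n-1}`. -/
def IMTSNE (n d : ℕ) (ρ : ℝ) : Set (Fin n → EuclideanSpace ℝ (Fin d)) :=
  ⋃ X : Fin n → EuclideanSpace ℝ (Fin (n - 1)), TSNE d ρ X

/-- The `m`-th cluster of the partition of `[n]` encoded by the labelling `ℓ`. -/
def cluster (ℓ : Fin n → Fin k) (m : Fin k) : Finset (Fin n) :=
  Finset.univ.filter fun i => ℓ i = m

/-- Average within-cluster distance `a(i)`. -/
def aScore [NormedAddCommGroup E] (X : Fin n → E) (ℓ : Fin n → Fin k) (i : Fin n) : ℝ :=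
  (∑ j ∈ cluster ℓ (ℓ i), ‖X i - X j‖) / (((cluster ℓ (ℓ i)).card : ℝ) - 1)

/-- Closest average across-cluster distance `b(i)`. -/
def bScore [NormedAddCommGroup E] (X : Fin n → E) (ℓ : Fin n → Fin k) (i : Fin n) : ℝ :=
  sInf {r : ℝ | ∃ m : Fin k, m ≠ ℓ i ∧
    r = (∑ j ∈ cluster ℓ m, ‖X i - X j‖) / ((cluster ℓ m).card : ℝ)}

/-- Silhouette score of point `i`. -/
def silhouette [NormedAddCommGroup E] (X : Fin n → E) (ℓ : Fin n → Fin k) (i : Fin n) : ℝ :=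
  if (cluster ℓ (ℓ i)).card = 1 then 0
  else (bScore X ℓ i - aScore X ℓ i) / max (aScore X ℓ i) (bScore X ℓ i)

/-- Average silhouette score `S̄(X; C₁,…,C_k)`. -/
def avgSilhouette [NormedAddCommGroup E] (X : Fin n → E) (ℓ : Fin n → Fin k) : ℝ :=
  (∑ i, silhouette X ℓ i) / (n : ℝ)

/-- Centroid `E(S)` of the points indexed by `S`. -/
def centroid [NormedAddCommGroup E] [NormedSpace ℝ E] (X : Fin n → E)
    (S : Finset (Fin n)) : E :=
  ((S.card : ℝ))⁻¹ • ∑ i ∈ S, X i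

/-- Numerator (between-cluster term) of the Calinski–Harabasz index. -/
def chNum [NormedAddCommGroup E] [NormedSpace ℝ E] (X : Fin n → E) (ℓ : Fin n → Fin k) : ℝ :=
  ((k : ℝ) - 1)⁻¹ *
    ∑ m : Fin k, ((cluster ℓ m).card : ℝ) *
      ‖centroid X (cluster ℓ m) - centroid X Finset.univ‖ ^ 2

/-- Denominator (within-cluster term) of the Calinski–Harabasz index. -/
def chDen [NormedAddCommGroup E] [NormedSpace ℝ E] (X : Fin n → E) (ℓ : Fin n → Fin k) : ℝ :=
  ((n : ℝ) - (k : ℝ))⁻¹ *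
    ∑ m : Fin k, ∑ i ∈ cluster ℓ m, ‖X i - centroid X (cluster ℓ m)‖ ^ 2

/-- Calinski–Harabasz index, valued in `[0,∞]`, with the conventions `CH = 1` when both
numerator and denominator vanish and `CH = ∞` when only the denominator vanishes. -/
def CHindex [NormedAddCommGroup E] [NormedSpace ℝ E] (X : Fin n → E) (ℓ : Fin n → Fin k) :
    EReal :=
  if chDen X ℓ = 0 then (if chNum X ℓ = 0 then 1 else ⊤)
  else ((chNum X ℓ / chDen X ℓ : ℝ) : EReal)

/-- Minimum between-cluster distance (numerator of the Dunn index). -/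
def diNum [NormedAddCommGroup E] (X : Fin n → E) (ℓ : Fin n → Fin k) : ℝ :=
  sInf {r : ℝ | ∃ i j : Fin n, ℓ i ≠ ℓ j ∧ r = ‖X i - X j‖}

/-- Maximum within-cluster distance (denominator of the Dunn index). -/
def diDen [NormedAddCommGroup E] (X : Fin n → E) (ℓ : Fin n → Fin k) : ℝ :=
  sSup {r : ℝ | ∃ i j : Fin n, ℓ i = ℓ j ∧ r = ‖X i - X j‖}

/-- Dunn index, valued in `[0,∞]`, with the conventions `DI = 1` when both numerator and
denominator vanish and `DI = ∞` when only the denominator vanishes. -/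
def DIindex [NormedAddCommGroup E] (X : Fin n → E) (ℓ : Fin n → Fin k) : EReal :=
  if diDen X ℓ = 0 then (if diNum X ℓ = 0 then 1 else ⊤)
  else ((diNum X ℓ / diDen X ℓ : ℝ) : EReal)

/-- `Y` is an `(α, Y i₀)`-outlier configuration: there is a hyperplane (with unit normal `v`)
separating `Y i₀` from the remaining points with margin width at least
`α · max{1, diam(Y ∖ {Y i₀})}`. -/
def IsOutlierConfig [NormedAddCommGroup F] [InnerProductSpace ℝ F] (Y : Fin n → F)
    (i0 : Fin n) (α : ℝ) : Prop :=
  0 < α ∧ ∃ v : F, ‖v‖ = 1 ∧ ∀ i : Fin n, i ≠ i0 →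
    α * max 1 (Metric.diam (Y '' {i : Fin n | i ≠ i0})) ≤ ⟪Y i - Y i0, v⟫

/-- The outlier number `α(Y, y₀)`: the largest `α` for which `Y` is an `(α, Y i₀)`-outlier
configuration (`0` if there is none). -/
def outlierNumber [NormedAddCommGroup F] [InnerProductSpace ℝ F] (Y : Fin n → F)
    (i0 : Fin n) : ℝ :=
  sSup {α : ℝ | IsOutlierConfig Y i0 α}

end TSNEPaper

/-!
Writing `t = (2σ²)⁻¹`, the conditional affinities `P_{·|i}(X;σ)` form the Gibbs distribution of
the energies `‖x_i - x_j‖²` at inverse temperature `t`, and `σ = 0` is its limit `t → ∞`: the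
uniform distribution on the nearest neighbours of `x_i`. The entropy of a Gibbs distribution has
derivative `-t · Var` in `t`, so unless all neighbours are equidistant (and then every bandwidth
gives the same affinities) the entropy increases strictly with `σ`, from `log₂` of the number of
nearest neighbours towards `log₂ (n - 1)`. Hence for `ρ < n - 1` the calibrated affinities are
well defined. Replacing every squared distance `d²` by `a d² + c` with `a > 0` only rescales `t`
by `a` and shifts all energies by a constant, so the calibrated affinities, the loss and its
critical points do not change.

For the path, let `Φ w = ∑ j, w_j x_j` on the hyperplane `W = 1ᗮ ⊆ ℝⁿ` of dimension `n - 1`, and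
let `(b_k, μ_k)` be an orthonormal eigenbasis of `Φ†Φ`. The point with coordinates
`√((1 - C) μ_k + C / 2) ⟪b_k, e_i⟫` depends continuously on `C`, and as `e_i - e_j ∈ W`, its
squared distance to the `j`-th point is
`(1 - C) ‖Φ (e_i - e_j)‖² + (C / 2) ‖e_i - e_j‖² = (1 - C) ‖x_i - x_j‖² + C`.
-/

open Real Finset Filter Topology Set Module

lemma StrictAntiOn.lt_of_tendsto_atTop {f : ℝ → ℝ} {a L t : ℝ} (hf : StrictAntiOn f (Ici a))
    (hL : Tendsto f atTop (𝓝 L)) (ht : a ≤ t) : L < f t := by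
  have ht' : a ≤ t + 1 := by linarith
  refine (le_of_tendsto hL (eventually_atTop.2 ⟨t + 1, fun s hs => ?_⟩)).trans_lt
    (hf ht ht' (lt_add_one t))
  exact hf.antitoneOn ht' (ht'.trans hs) hs

lemma StrictMonoOn.existsUnique_minimizer_abs_sub {H : ℝ → ℝ} {L M : ℝ}
    (hH : StrictMonoOn H (Ici 0)) (hsurj : Ioo (H 0) M ⊆ H '' Ici 0) (hL : L < M) :
    ∃! σ, 0 ≤ σ ∧ ∀ σ', 0 ≤ σ' → |H σ - L| ≤ |H σ' - L| := by
  rcases le_or_gt L (H 0) with hL0 | hL0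
  · have hge : ∀ σ, 0 ≤ σ → H 0 ≤ H σ := fun σ hσ =>
      hH.monotoneOn Set.self_mem_Ici hσ hσ
    refine ⟨0, ⟨le_rfl, fun σ' hσ' => ?_⟩, fun τ ⟨hτ, hmin⟩ => ?_⟩
    · rw [abs_of_nonneg (by linarith), abs_of_nonneg (by linarith [hge σ' hσ'])]
      linarith [hge σ' hσ']
    · by_contra hτ0
      have hlt := hH Set.self_mem_Ici hτ (lt_of_le_of_ne hτ (Ne.symm hτ0))
      have := hmin 0 le_rfl
      rw [abs_of_nonneg (by linarith), abs_of_nonneg (by linarith)] at this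
      linarith
  · obtain ⟨σ₀, hσ₀, hHσ₀⟩ := hsurj ⟨hL0, hL⟩
    refine ⟨σ₀, ⟨hσ₀, fun σ' _ => by simp [hHσ₀]⟩, fun τ ⟨hτ, hmin⟩ => hH.injOn hτ hσ₀ ?_⟩
    have := hmin σ₀ hσ₀
    rw [hHσ₀, sub_self, abs_zero, abs_nonpos_iff, sub_eq_zero] at this
    rw [this, hHσ₀]

section Gibbs
variable {ι : Type*} (U : ι → ℝ) (J : Finset ι)

def gibbsMoment (k : ℕ) (t : ℝ) : ℝ := ∑ j ∈ J, U j ^ k * exp (-(t * U j))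

def gibbs (t : ℝ) (j : ι) : ℝ := exp (-(t * U j)) / gibbsMoment U J 0 t

def gibbsEntropy (t : ℝ) : ℝ := ∑ j ∈ J, negMulLog (gibbs U J t j)

variable {U J}

lemma gibbsMoment_zero_pos (hJ : J.Nonempty) (t : ℝ) : 0 < gibbsMoment U J 0 t := by
  unfold gibbsMoment
  exact sum_pos (fun j _ => by positivity) hJ

lemma hasDerivAt_gibbsMoment (k : ℕ) (t : ℝ) :
    HasDerivAt (gibbsMoment U J k) (-gibbsMoment U J (k + 1) t) t := by
  unfold gibbsMoment
  rw [← sum_neg_distrib]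
  refine HasDerivAt.fun_sum fun j _ => ?_
  exact ((hasDerivAt_mul_const (U j)).fun_neg.exp.const_mul (U j ^ k)).congr_deriv (by ring)

lemma gibbsEntropy_eq_mul_div_add_log (hJ : J.Nonempty) (t : ℝ) :
    gibbsEntropy U J t =
      t * (gibbsMoment U J 1 t / gibbsMoment U J 0 t) + log (gibbsMoment U J 0 t) := by
  have hZ := (gibbsMoment_zero_pos (U := U) hJ t).ne'
  have hterm : ∀ j ∈ J, negMulLog (gibbs U J t j) = (t * (U j ^ 1 * exp (-(t * U j))) +
      log (gibbsMoment U J 0 t) * (U j ^ 0 * exp (-(t * U j)))) / gibbsMoment U J 0 t := by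
    intro j _
    rw [gibbs, negMulLog, log_div (exp_ne_zero _) hZ, log_exp]
    field_simp
    ring
  rw [gibbsEntropy, sum_congr rfl hterm, ← sum_div, sum_add_distrib, ← mul_sum, ← mul_sum]
  change (t * gibbsMoment U J 1 t + log (gibbsMoment U J 0 t) * gibbsMoment U J 0 t) / _ = _
  field_simp

lemma hasDerivAt_gibbsEntropy (hJ : J.Nonempty) (t : ℝ) :
    HasDerivAt (gibbsEntropy U J)
      (t * (gibbsMoment U J 1 t ^ 2 - gibbsMoment U J 2 t * gibbsMoment U J 0 t) /
        gibbsMoment U J 0 t ^ 2) t := by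
  have hZ := (gibbsMoment_zero_pos (U := U) hJ t).ne'
  have h : HasDerivAt (fun s => s * (gibbsMoment U J 1 s / gibbsMoment U J 0 s) +
      log (gibbsMoment U J 0 s)) _ t :=
    ((hasDerivAt_id' t).mul ((hasDerivAt_gibbsMoment 1 t).div
      (hasDerivAt_gibbsMoment 0 t) hZ)).add ((hasDerivAt_gibbsMoment 0 t).log hZ)
  rw [funext (gibbsEntropy_eq_mul_div_add_log hJ)]
  convert h using 1
  simp only [Pi.div_apply]
  field_simp
  ring

lemma sq_gibbsMoment_one_lt {j l : ι} (hj : j ∈ J) (hl : l ∈ J) (hjl : U j ≠ U l) (t : ℝ) :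
    gibbsMoment U J 1 t ^ 2 < gibbsMoment U J 2 t * gibbsMoment U J 0 t := by
  set w : ι → ℝ := fun j => exp (-(t * U j))
  have lagrange : ∑ j ∈ J, ∑ l ∈ J, w j * w l * (U j - U l) ^ 2 =
      2 * (gibbsMoment U J 2 t * gibbsMoment U J 0 t - gibbsMoment U J 1 t ^ 2) := by
    rw [show ∀ a b c : ℝ, 2 * (a * b - c ^ 2) = a * b + b * a - 2 * (c * c) by intros; ring]
    simp only [gibbsMoment, sum_mul_sum]
    simp only [mul_sum, ← sum_add_distrib, ← sum_sub_distrib]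
    refine sum_congr rfl fun j _ => sum_congr rfl fun l _ => ?_
    simp only [w]
    ring
  have hpos : 0 < ∑ j ∈ J, ∑ l ∈ J, w j * w l * (U j - U l) ^ 2 := by
    refine sum_pos' (fun j _ => sum_nonneg fun l _ => by positivity) ⟨j, hj, ?_⟩
    refine sum_pos' (fun l _ => by positivity) ⟨l, hl, ?_⟩
    have := sub_ne_zero.2 hjl
    positivity
  linarith

lemma continuous_gibbsEntropy (hJ : J.Nonempty) : Continuous (gibbsEntropy U J) :=
  continuous_iff_continuousAt.2 fun t => (hasDerivAt_gibbsEntropy hJ t).continuousAt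

lemma strictAntiOn_gibbsEntropy {j l : ι} (hj : j ∈ J) (hl : l ∈ J) (hjl : U j ≠ U l) :
    StrictAntiOn (gibbsEntropy U J) (Ici 0) := by
  have hJ : J.Nonempty := ⟨j, hj⟩
  refine strictAntiOn_of_deriv_neg (convex_Ici 0) (continuous_gibbsEntropy hJ).continuousOn
    fun t ht => ?_
  rw [interior_Ici, Set.mem_Ioi] at ht
  rw [(hasDerivAt_gibbsEntropy hJ t).deriv]
  have := sq_gibbsMoment_one_lt hj hl hjl t
  have := gibbsMoment_zero_pos (U := U) hJ t
  exact div_neg_of_neg_of_pos (mul_neg_of_pos_of_neg ht (by linarith)) (by positivity)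

lemma gibbsEntropy_zero : gibbsEntropy U J 0 = log #J := by
  rcases J.eq_empty_or_nonempty with rfl | hJ
  · simp [gibbsEntropy]
  have hJ0 : (#J : ℝ) ≠ 0 := by simpa using hJ.ne_empty
  simp only [gibbsEntropy, gibbs, gibbsMoment, zero_mul, neg_zero, exp_zero, pow_zero, mul_one,
    sum_const, nsmul_eq_mul, negMulLog, one_div, log_inv]
  field_simp

lemma gibbs_congr {U' : ι → ℝ} (h : ∀ l ∈ J, U l = U' l) {j : ι} (hj : j ∈ J) (t : ℝ) :
    gibbs U J t j = gibbs U' J t j := by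
  simp only [gibbs, gibbsMoment, h j hj]
  rw [sum_congr rfl fun l hl => by rw [h l hl]]

lemma gibbs_of_forall_mem_eq {c : ℝ} (h : ∀ l ∈ J, U l = c) {j : ι} (hj : j ∈ J) (t : ℝ) :
    gibbs U J t j = (#J : ℝ)⁻¹ := by
  rw [gibbs_congr h hj]
  simp [gibbs, gibbsMoment]
  field_simp

lemma gibbs_mul_add_const (a c t : ℝ) (j : ι) :
    gibbs (fun l => a * U l + c) J t j = gibbs U J (t * a) j := by
  have hsplit : ∀ l, exp (-(t * (a * U l + c))) = exp (-(t * c)) * exp (-(t * a * U l)) := by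
    intro l
    rw [← exp_add]
    ring_nf
  simp only [gibbs, gibbsMoment, pow_zero, one_mul, hsplit, ← mul_sum]
  exact mul_div_mul_left _ _ (exp_ne_zero _)

lemma gibbs_sub_const (c t : ℝ) (j : ι) : gibbs (fun l => U l - c) J t j = gibbs U J t j := by
  simpa [← sub_eq_add_neg] using gibbs_mul_add_const (U := U) (J := J) 1 (-c) t j

lemma tendsto_exp_neg_mul_atTop {D : ℝ} (hD : 0 ≤ D) :
    Tendsto (fun t => exp (-(t * D))) atTop (𝓝 (if D = 0 then 1 else 0)) := by
  rcases hD.eq_or_lt with rfl | hD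
  · simp
  · rw [if_neg hD.ne']
    exact tendsto_exp_neg_atTop_nhds_zero.comp (tendsto_id.atTop_mul_const hD)

lemma tendsto_gibbsEntropy_atTop {j₀ : ι} (hj₀ : j₀ ∈ J) (hmin : ∀ l ∈ J, U j₀ ≤ U l) :
    Tendsto (gibbsEntropy U J) atTop (𝓝 (log #{l ∈ J | U l = U j₀})) := by
  set D : ι → ℝ := fun l => U l - U j₀
  have hD : ∀ l ∈ J, 0 ≤ D l := fun l hl => sub_nonneg.2 (hmin l hl)
  have hD0 : ∀ l, D l = 0 ↔ U l = U j₀ := fun l => sub_eq_zero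
  set m : ℝ := ((J.filter fun l => U l = U j₀).card : ℝ)
  have hm : 0 < m := Nat.cast_pos.2 (card_pos.2 ⟨j₀, mem_filter.2 ⟨hj₀, rfl⟩⟩)
  have hZ : Tendsto (gibbsMoment D J 0) atTop (𝓝 m) := by
    have h := tendsto_finsetSum J fun l hl => tendsto_exp_neg_mul_atTop (hD l hl)
    simp only [hD0, sum_boole] at h
    convert h using 1
    exact funext fun t => by simp [gibbsMoment]
  have hgibbs : ∀ j ∈ J, Tendsto (fun t => gibbs U J t j) atTop
      (𝓝 ((if U j = U j₀ then 1 else 0) / m)) := fun j hj => by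
    simp only [← hD0]
    exact ((tendsto_exp_neg_mul_atTop (hD j hj)).div hZ hm.ne').congr fun t =>
      gibbs_sub_const (U j₀) t j
  have hlim := tendsto_finsetSum J fun j hj => (continuous_negMulLog.tendsto _).comp (hgibbs j hj)
  have hterm : ∀ c, negMulLog ((if U c = U j₀ then 1 else 0) / m) =
      if U c = U j₀ then negMulLog m⁻¹ else 0 := fun c => by split_ifs <;> simp
  rw [sum_congr rfl fun c _ => hterm c, ← sum_filter, sum_const, nsmul_eq_mul, negMulLog,
    log_inv, show m * (-m⁻¹ * -log m) = log m by field_simp] at hlim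
  exact hlim

end Gibbs

section Interpolation
variable {W E : Type*} [NormedAddCommGroup W] [InnerProductSpace ℝ W] [FiniteDimensional ℝ W]
  [NormedAddCommGroup E] [InnerProductSpace ℝ E] [FiniteDimensional ℝ E] {m : ℕ}

def gramSqrtCoords (Φ : W →ₗ[ℝ] E) (hm : finrank ℝ W = m) (a c : ℝ) (w : W) :
    EuclideanSpace ℝ (Fin m) :=
  WithLp.toLp 2 fun k => √(a * Φ.isSymmetric_adjoint_comp_self.eigenvalues hm k + c) *
    (Φ.isSymmetric_adjoint_comp_self.eigenvectorBasis hm).repr w k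

variable (Φ : W →ₗ[ℝ] E) (hm : finrank ℝ W = m)

lemma gramSqrtCoords_sub (a c : ℝ) (w w' : W) :
    gramSqrtCoords Φ hm a c w - gramSqrtCoords Φ hm a c w' =
      gramSqrtCoords Φ hm a c (w - w') := by
  ext k
  simp [gramSqrtCoords, mul_sub]

lemma sum_eigenvalues_adjoint_comp_self_mul_sq (w : W) :
    ∑ k, Φ.isSymmetric_adjoint_comp_self.eigenvalues hm k *
      (Φ.isSymmetric_adjoint_comp_self.eigenvectorBasis hm).repr w k ^ 2 = ‖Φ w‖ ^ 2 := by
  set hT := Φ.isSymmetric_adjoint_comp_self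
  set b := hT.eigenvectorBasis hm
  calc _ = ⟪b.repr ((LinearMap.adjoint Φ ∘ₗ Φ) w), b.repr w⟫ := by
        simp only [PiLp.inner_apply, hT.eigenvectorBasis_apply_self_apply, b]
        simp [sq, mul_assoc, mul_comm]
    _ = ‖Φ w‖ ^ 2 := by
        rw [b.repr.inner_map_map, LinearMap.comp_apply, LinearMap.adjoint_inner_left,
          real_inner_self_eq_norm_sq]

lemma norm_sq_gramSqrtCoords {a c : ℝ} (ha : 0 ≤ a) (hc : 0 ≤ c) (w : W) :
    ‖gramSqrtCoords Φ hm a c w‖ ^ 2 = a * ‖Φ w‖ ^ 2 + c * ‖w‖ ^ 2 := by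
  set hT := Φ.isSymmetric_adjoint_comp_self
  have hμ := Φ.isPositive_adjoint_comp_self.nonneg_eigenvalues hm
  rw [← sum_eigenvalues_adjoint_comp_self_mul_sq Φ hm, ← (hT.eigenvectorBasis hm).repr.norm_map w,
    EuclideanSpace.real_norm_sq_eq, EuclideanSpace.real_norm_sq_eq, mul_sum, mul_sum,
    ← sum_add_distrib]
  refine sum_congr rfl fun k _ => ?_
  rw [gramSqrtCoords, mul_pow, sq_sqrt (by have := hμ k; positivity)]
  ring

lemma continuous_gramSqrtCoords {a c : ℝ → ℝ} (ha : Continuous a) (hc : Continuous c) (w : W) :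
    Continuous fun t => gramSqrtCoords Φ hm (a t) (c t) w := by
  unfold gramSqrtCoords
  fun_prop

lemma finrank_orthogonal_span_one (n : ℕ) :
    finrank ℝ (ℝ ∙ WithLp.toLp 2 (1 : Fin n → ℝ))ᗮ = n - 1 := by
  rcases n with _ | n
  · exact finrank_zero_of_subsingleton
  · have hne : WithLp.toLp 2 (1 : Fin (n + 1) → ℝ) ≠ 0 := fun h => by
      simpa using congrArg (fun v : EuclideanSpace ℝ (Fin (n + 1)) => v 0) h
    have h := Submodule.finrank_add_finrank_orthogonal (ℝ ∙ WithLp.toLp 2 (1 : Fin (n + 1) → ℝ))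
    rw [finrank_span_singleton hne, finrank_euclideanSpace_fin] at h
    omega

theorem exists_continuous_sq_dist_interpolation {n : ℕ} (X : Fin n → E) :
    ∃ g : ℝ → Fin n → EuclideanSpace ℝ (Fin (n - 1)), Continuous g ∧
      ∀ C ∈ Set.Icc (0 : ℝ) 1, ∀ i j, i ≠ j →
        ‖g C i - g C j‖ ^ 2 = (1 - C) * ‖X i - X j‖ ^ 2 + C := by
  set K := (ℝ ∙ WithLp.toLp 2 (1 : Fin n → ℝ))ᗮ
  set e : Fin n → EuclideanSpace ℝ (Fin n) := fun i => EuclideanSpace.single i 1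
  set Φ : K →ₗ[ℝ] E := (EuclideanSpace.basisFun (Fin n) ℝ).toBasis.constr ℝ X ∘ₗ K.subtype
  refine ⟨fun C i => gramSqrtCoords Φ (finrank_orthogonal_span_one n) (1 - C) (C / 2)
    (K.orthogonalProjectionOnto (e i)), ?_, fun C hC i j hij => ?_⟩
  · exact continuous_pi fun i => continuous_gramSqrtCoords _ _ (by fun_prop) (by fun_prop) _
  have hmem : e i - e j ∈ K := by
    simp [K, e, Submodule.mem_orthogonal_singleton_iff_inner_right, inner_sub_right,
      EuclideanSpace.inner_single_right]
  have hproj : K.orthogonalProjectionOnto (e i) - K.orthogonalProjectionOnto (e j) =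
      ⟨e i - e j, hmem⟩ := by
    rw [← map_sub, ← K.orthogonalProjectionOnto_mem_subspace_eq_self ⟨_, hmem⟩]
  have hΦ : Φ ⟨e i - e j, hmem⟩ = X i - X j := by
    have hb (l : Fin n) : (EuclideanSpace.basisFun (Fin n) ℝ).toBasis.constr ℝ X (e l) = X l := by
      rw [← (EuclideanSpace.basisFun (Fin n) ℝ).toBasis.constr_basis ℝ X l]
      simp [e]
    simp only [Φ, LinearMap.comp_apply, Submodule.subtype_apply, map_sub, hb]
  have hnorm : ‖(⟨e i - e j, hmem⟩ : K)‖ ^ 2 = 2 := by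
    simp [e, norm_sub_sq_real, EuclideanSpace.inner_single_left, hij.symm]
    norm_num
  rw [gramSqrtCoords_sub, hproj, norm_sq_gramSqrtCoords _ _ (sub_nonneg.2 hC.2)
    (by linarith [hC.1]), hΦ, hnorm]
  ring

end Interpolation

namespace TSNEPaper

def sqDistFrom {n : ℕ} {V : Type*} [NormedAddCommGroup V] (X : Fin n → V) (i l : Fin n) : ℝ :=
  ‖X i - X l‖ ^ 2

section Calibration
variable {n : ℕ} {V : Type*} [NormedAddCommGroup V] {X : Fin n → V} {i : Fin n}

lemma entropy2_eq_sum_negMulLog (p : Fin n → ℝ) :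
    entropy2 p = (∑ j, negMulLog (p j)) / log 2 := by
  simp only [entropy2, negMulLog, logb, sum_div, ← sum_neg_distrib]
  exact sum_congr rfl fun j _ => by ring

lemma condAffinity_self (σ : ℝ) : condAffinity X σ i i = 0 := by
  simp [condAffinity]

lemma condAffinity_eq_gibbs {σ : ℝ} (hσ : σ ≠ 0) {j : Fin n} (hj : j ≠ i) :
    condAffinity X σ i j = gibbs (sqDistFrom X i) (univ.erase i) (2 * σ ^ 2)⁻¹ j := by
  simp only [condAffinity, if_neg hj, if_neg hσ, gibbs, gibbsMoment, pow_zero, one_mul, sqDistFrom,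
    neg_div, ← div_eq_inv_mul]

lemma entropy2_condAffinity {σ : ℝ} (hσ : σ ≠ 0) :
    entropy2 (condAffinity X σ i) =
      gibbsEntropy (sqDistFrom X i) (univ.erase i) (2 * σ ^ 2)⁻¹ / log 2 := by
  rw [entropy2_eq_sum_negMulLog, ← sum_erase_add _ _ (mem_univ i), condAffinity_self,
    negMulLog_zero, add_zero, gibbsEntropy]
  congr 1
  exact sum_congr rfl fun j hj => by rw [condAffinity_eq_gibbs hσ (ne_of_mem_erase hj)]

lemma condAffinity_zero_apply (j : Fin n) :
    condAffinity X 0 i j = if j ∈ nearestSet X i then (#(nearestSet X i) : ℝ)⁻¹ else 0 := by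
  unfold condAffinity
  split_ifs <;> simp_all [nearestSet]

lemma entropy2_condAffinity_zero :
    entropy2 (condAffinity X 0 i) = log #(nearestSet X i) / log 2 := by
  simp only [entropy2_eq_sum_negMulLog, condAffinity_zero_apply, apply_ite negMulLog,
    negMulLog_zero]
  rw [← sum_filter, filter_mem_eq_inter, Finset.univ_inter, sum_const, nsmul_eq_mul, negMulLog,
    log_inv]
  rcases eq_or_ne (#(nearestSet X i) : ℝ) 0 with h | h
  · simp [h]
  · field_simp

lemma nearestSet_subset : nearestSet X i ⊆ univ.erase i :=
  filter_subset _ _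

lemma sqDistFrom_le_of_mem_nearestSet {j₀ : Fin n} (hj₀ : j₀ ∈ nearestSet X i) {l : Fin n}
    (hl : l ∈ univ.erase i) : sqDistFrom X i j₀ ≤ sqDistFrom X i l :=
  pow_le_pow_left₀ (norm_nonneg _) ((mem_filter.1 hj₀).2 l hl) 2

lemma nearestSet_eq_filter {j₀ : Fin n} (hj₀ : j₀ ∈ nearestSet X i) :
    nearestSet X i = {l ∈ univ.erase i | sqDistFrom X i l = sqDistFrom X i j₀} := by
  ext j
  refine ⟨fun hj => mem_filter.2 ⟨mem_of_mem_filter _ hj, le_antisymm ?_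
    (sqDistFrom_le_of_mem_nearestSet hj₀ (mem_of_mem_filter _ hj))⟩, fun hj => ?_⟩
  · exact sqDistFrom_le_of_mem_nearestSet hj (mem_of_mem_filter _ hj₀)
  · obtain ⟨hjJ, hjeq⟩ := mem_filter.1 hj
    have hnorm : ‖X i - X j‖ = ‖X i - X j₀‖ :=
      (sq_eq_sq₀ (norm_nonneg _) (norm_nonneg _)).1 hjeq
    exact mem_filter.2 ⟨hjJ, fun l hl => hnorm ▸ (mem_filter.1 hj₀).2 l hl⟩

lemma nearestSet_nonempty (hJ : (univ.erase i).Nonempty) : (nearestSet X i).Nonempty := by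
  obtain ⟨j, hj, hmin⟩ := exists_min_image (univ.erase i) (fun j => ‖X i - X j‖) hJ
  exact ⟨j, mem_filter.2 ⟨hj, hmin⟩⟩

lemma tendsto_gibbsEntropy_sqDistFrom (hJ : (univ.erase i).Nonempty) :
    Tendsto (gibbsEntropy (sqDistFrom X i) (univ.erase i)) atTop
      (𝓝 (log #(nearestSet X i))) := by
  obtain ⟨j₀, hj₀⟩ := nearestSet_nonempty (X := X) hJ
  rw [nearestSet_eq_filter hj₀]
  exact tendsto_gibbsEntropy_atTop (mem_of_mem_filter _ hj₀)
    fun l hl => sqDistFrom_le_of_mem_nearestSet hj₀ hl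

lemma strictAntiOn_gibbsEntropy_sqDistFrom (hne : nearestSet X i ≠ univ.erase i) :
    StrictAntiOn (gibbsEntropy (sqDistFrom X i) (univ.erase i)) (Ici 0) := by
  obtain ⟨j₁, hj₁, hj₁S⟩ : ∃ j₁ ∈ univ.erase i, j₁ ∉ nearestSet X i := by
    by_contra! h
    exact hne (Subset.antisymm nearestSet_subset h)
  obtain ⟨j₀, hj₀⟩ := nearestSet_nonempty (X := X) ⟨j₁, hj₁⟩
  refine strictAntiOn_gibbsEntropy (mem_of_mem_filter _ hj₀) hj₁ fun h => hj₁S ?_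
  rw [nearestSet_eq_filter hj₀]
  exact mem_filter.2 ⟨hj₁, h.symm⟩

lemma condAffinity_eq_condAffinity_zero (h : nearestSet X i = univ.erase i) (σ : ℝ) :
    condAffinity X σ i = condAffinity X 0 i := by
  funext j
  rcases eq_or_ne σ 0 with rfl | hσ
  · rfl
  rcases eq_or_ne j i with rfl | hj
  · simp [condAffinity_self]
  have hjJ : j ∈ univ.erase i := mem_erase.2 ⟨hj, mem_univ j⟩
  obtain ⟨j₀, hj₀⟩ : (nearestSet X i).Nonempty := h ▸ ⟨j, hjJ⟩
  have hconst : ∀ l ∈ univ.erase i, sqDistFrom X i l = sqDistFrom X i j₀ := fun l hl => by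
    rw [← h, nearestSet_eq_filter hj₀] at hl
    exact (mem_filter.1 hl).2
  rw [condAffinity_eq_gibbs hσ hj, condAffinity_zero_apply, h, if_pos hjJ,
    gibbs_of_forall_mem_eq hconst hjJ]

lemma erase_nonempty_of_nearestSet_ne (hne : nearestSet X i ≠ univ.erase i) :
    (univ.erase i).Nonempty := by
  by_contra! h
  exact hne (by rw [h, ← subset_empty, ← h]; exact nearestSet_subset)

lemma strictMonoOn_entropy2_condAffinity (hne : nearestSet X i ≠ univ.erase i) :
    StrictMonoOn (fun σ => entropy2 (condAffinity X σ i)) (Ici 0) := by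
  have hanti := strictAntiOn_gibbsEntropy_sqDistFrom hne
  have hlim := tendsto_gibbsEntropy_sqDistFrom (X := X) (erase_nonempty_of_nearestSet_ne hne)
  have hlog2 : 0 < log 2 := log_pos one_lt_two
  intro σ hσ τ hτ hστ
  have hτ0 : τ ≠ 0 := (lt_of_le_of_lt hσ hστ).ne'
  simp only [entropy2_condAffinity hτ0]
  rcases eq_or_lt_of_le (show 0 ≤ σ from hσ) with rfl | hσ0
  · rw [entropy2_condAffinity_zero]
    exact div_lt_div_of_pos_right (hanti.lt_of_tendsto_atTop hlim (by positivity)) hlog2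
  · rw [entropy2_condAffinity hσ0.ne']
    refine div_lt_div_of_pos_right
      (hanti (Set.mem_Ici.2 (by positivity)) (Set.mem_Ici.2 (by positivity)) ?_) hlog2
    gcongr

lemma Ioo_subset_image_entropy2_condAffinity (hne : nearestSet X i ≠ univ.erase i) :
    Ioo (entropy2 (condAffinity X 0 i)) (logb 2 (n - 1)) ⊆
      (fun σ => entropy2 (condAffinity X σ i)) '' Ici 0 := by
  have hJ := erase_nonempty_of_nearestSet_ne hne
  have hlog2 : 0 < log 2 := log_pos one_lt_two
  have hh0 : gibbsEntropy (sqDistFrom X i) (univ.erase i) 0 = log (n - 1) := by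
    rw [gibbsEntropy_zero, card_erase_of_mem (mem_univ i), card_univ, Fintype.card_fin,
      Nat.cast_pred i.pos]
  rintro y ⟨hy0, hy1⟩
  rw [entropy2_condAffinity_zero, div_lt_iff₀ hlog2] at hy0
  rw [logb, lt_div_iff₀ hlog2, ← hh0] at hy1
  obtain ⟨t₂, ht₂, ht₂0⟩ := ((tendsto_gibbsEntropy_sqDistFrom (X := X) hJ |>.eventually
    (gt_mem_nhds hy0)).and (eventually_ge_atTop 0)).exists
  obtain ⟨t, ⟨ht0, -⟩, hty⟩ := intermediate_value_Icc' ht₂0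
    (continuous_gibbsEntropy hJ).continuousOn ⟨ht₂.le, hy1.le⟩
  have htpos : 0 < t := lt_of_le_of_ne ht0 fun ht => by rw [← ht] at hty; linarith
  refine ⟨√((2 * t)⁻¹), sqrt_nonneg _, ?_⟩
  simp only
  rw [entropy2_condAffinity (by positivity), sq_sqrt (by positivity),
    show (2 * (2 * t)⁻¹)⁻¹ = t by field_simp, hty]
  field_simp

lemma existsUnique_isCalibrated (hne : nearestSet X i ≠ univ.erase i) {ρ : ℝ} (hρ0 : 0 < ρ)
    (hρn : ρ < n - 1) : ∃! σ, IsCalibrated X ρ i σ :=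
  (strictMonoOn_entropy2_condAffinity hne).existsUnique_minimizer_abs_sub
    (Ioo_subset_image_entropy2_condAffinity hne) (logb_lt_logb one_lt_two hρ0 hρn)

lemma exists_isCalibrated {ρ : ℝ} (hρ0 : 0 < ρ) (hρn : ρ < n - 1) :
    ∃ σ, IsCalibrated X ρ i σ := by
  by_cases h : nearestSet X i = univ.erase i
  · exact ⟨0, le_rfl, fun σ' _ => by rw [condAffinity_eq_condAffinity_zero h σ']⟩
  · exact (existsUnique_isCalibrated h hρ0 hρn).exists

lemma condAffinity_eq_of_isCalibrated {ρ σ τ : ℝ} (hρ0 : 0 < ρ) (hρn : ρ < n - 1)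
    (hσ : IsCalibrated X ρ i σ) (hτ : IsCalibrated X ρ i τ) :
    condAffinity X σ i = condAffinity X τ i := by
  by_cases h : nearestSet X i = univ.erase i
  · rw [condAffinity_eq_condAffinity_zero h σ, condAffinity_eq_condAffinity_zero h τ]
  · rw [(existsUnique_isCalibrated h hρ0 hρn).unique hσ hτ]

end Calibration

section Transfer
variable {n : ℕ} {V W : Type*} [NormedAddCommGroup V] [NormedAddCommGroup W]
  {X : Fin n → V} {Y : Fin n → W} {a c : ℝ}

lemma nearestSet_eq_of_sq_dist_eq (ha : 0 < a)
    (hdist : ∀ i j, i ≠ j → ‖Y i - Y j‖ ^ 2 = a * ‖X i - X j‖ ^ 2 + c) (i : Fin n) :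
    nearestSet Y i = nearestSet X i := by
  refine filter_congr fun j hj => forall₂_congr fun l hl => ?_
  rw [← sq_le_sq₀ (norm_nonneg _) (norm_nonneg _), ← sq_le_sq₀ (norm_nonneg _) (norm_nonneg _),
    hdist i j (ne_of_mem_erase hj).symm, hdist i l (ne_of_mem_erase hl).symm]
  constructor <;> intro h <;> nlinarith

lemma condAffinity_eq_of_sq_dist_eq (ha : 0 < a)
    (hdist : ∀ i j, i ≠ j → ‖Y i - Y j‖ ^ 2 = a * ‖X i - X j‖ ^ 2 + c) (i : Fin n) (σ : ℝ) :
    condAffinity Y σ i = condAffinity X (σ / √a) i := by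
  funext j
  rcases eq_or_ne j i with rfl | hj
  · simp [condAffinity_self]
  rcases eq_or_ne σ 0 with rfl | hσ
  · simp only [condAffinity, zero_div, ↓reduceIte, nearestSet_eq_of_sq_dist_eq ha hdist]
  have hs : 0 < √a := sqrt_pos.2 ha
  rw [condAffinity_eq_gibbs hσ hj, condAffinity_eq_gibbs (div_ne_zero hσ hs.ne') hj,
    gibbs_congr (U := sqDistFrom Y i) (U' := fun l => a * sqDistFrom X i l + c)
      (fun l hl => hdist i l (ne_of_mem_erase hl).symm) (mem_erase.2 ⟨hj, mem_univ j⟩),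
    gibbs_mul_add_const]
  congr 1
  rw [div_pow, sq_sqrt ha.le]
  field_simp

lemma isCalibrated_iff_of_sq_dist_eq (ha : 0 < a)
    (hdist : ∀ i j, i ≠ j → ‖Y i - Y j‖ ^ 2 = a * ‖X i - X j‖ ^ 2 + c) {ρ σ : ℝ} (i : Fin n) :
    IsCalibrated Y ρ i σ ↔ IsCalibrated X ρ i (σ / √a) := by
  have hs : 0 < √a := sqrt_pos.2 ha
  simp only [IsCalibrated, condAffinity_eq_of_sq_dist_eq ha hdist]
  refine and_congr (by rw [le_div_iff₀ hs, zero_mul])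
    ⟨fun h σ' hσ' => ?_, fun h σ' hσ' => h _ (div_nonneg hσ' hs.le)⟩
  simpa [mul_div_cancel_right₀ _ hs.ne'] using h (σ' * √a) (by positivity)

lemma condAffinity_sigmaStar_eq_of_sq_dist_eq (ha : 0 < a)
    (hdist : ∀ i j, i ≠ j → ‖Y i - Y j‖ ^ 2 = a * ‖X i - X j‖ ^ 2 + c) {ρ : ℝ} (hρ0 : 0 < ρ)
    (hρn : ρ < n - 1) (i : Fin n) :
    condAffinity Y (sigmaStar Y ρ i) i = condAffinity X (sigmaStar X ρ i) i := by
  -- `sigmaStar` is `Classical.epsilon`: it is calibrated only once a calibrated bandwidth exists.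
  obtain ⟨σ, hσ⟩ := exists_isCalibrated (X := X) (i := i) hρ0 hρn
  have hX : IsCalibrated X ρ i (sigmaStar X ρ i) := Classical.epsilon_spec ⟨σ, hσ⟩
  have hY : IsCalibrated Y ρ i (sigmaStar Y ρ i) := Classical.epsilon_spec
    ⟨σ * √a, (isCalibrated_iff_of_sq_dist_eq ha hdist i).2
      (by rwa [mul_div_cancel_right₀ _ (sqrt_pos.2 ha).ne'])⟩
  rw [condAffinity_eq_of_sq_dist_eq ha hdist]
  exact condAffinity_eq_of_isCalibrated hρ0 hρn
    ((isCalibrated_iff_of_sq_dist_eq ha hdist i).1 hY) hX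

lemma inAffinity_eq_of_sq_dist_eq (ha : 0 < a)
    (hdist : ∀ i j, i ≠ j → ‖Y i - Y j‖ ^ 2 = a * ‖X i - X j‖ ^ 2 + c) {ρ : ℝ} (hρ0 : 0 < ρ)
    (hρn : ρ < n - 1) : inAffinity Y ρ = inAffinity X ρ := by
  funext i j
  simp only [inAffinity, condAffinity_sigmaStar_eq_of_sq_dist_eq ha hdist hρ0 hρn]

lemma TSNE_eq_of_sq_dist_eq (d : ℕ) (ha : 0 < a)
    (hdist : ∀ i j, i ≠ j → ‖Y i - Y j‖ ^ 2 = a * ‖X i - X j‖ ^ 2 + c) {ρ : ℝ} (hρ0 : 0 < ρ)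
    (hρn : ρ < n - 1) : TSNE d ρ Y = TSNE d ρ X := by
  unfold TSNE tsneLoss
  rw [inAffinity_eq_of_sq_dist_eq ha hdist hρ0 hρn]

end Transfer

theorem g_exists_general (n d : ℕ)
    (X : Fin n → EuclideanSpace ℝ (Fin (n - 1))) :
    ∃ g : ℝ → (Fin n → EuclideanSpace ℝ (Fin (n - 1))),
      ContinuousOn g (Set.Icc 0 1) ∧
      (∀ C ∈ Set.Icc (0 : ℝ) 1, ∀ i j : Fin n, i ≠ j →
        ‖g C i - g C j‖ ^ 2 = (1 - C) * ‖X i - X j‖ ^ 2 + C) ∧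
      (∀ ρ : ℝ, 1 < ρ → ρ < (n : ℝ) - 1 →
        ∀ C ∈ Set.Ico (0 : ℝ) 1, TSNE d ρ X = TSNE d ρ (g C)) := by
  obtain ⟨g, hg, hg_dist⟩ := exists_continuous_sq_dist_interpolation X
  refine ⟨g, hg.continuousOn, hg_dist, fun ρ hρ hρn C hC => ?_⟩
  exact (TSNE_eq_of_sq_dist_eq d (sub_pos.2 hC.2) (hg_dist C (Ico_subset_Icc_self hC))
    (by linarith) hρn).symm

/-- Corollary `g_exists`: there is a continuous path `g` on `[0,1]` of
datasets interpolating the squared distances of `X` with those of a unit simplex, along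
which the set of stationary t-SNE outputs is constant (for `C < 1`). -/
theorem g_exists (n d : ℕ) (hn : 2 < n) (hd : 1 ≤ d)
    (X : Fin n → EuclideanSpace ℝ (Fin (n - 1))) :
    ∃ g : ℝ → (Fin n → EuclideanSpace ℝ (Fin (n - 1))),
      ContinuousOn g (Set.Icc 0 1) ∧
      (∀ C ∈ Set.Icc (0 : ℝ) 1, ∀ i j : Fin n, i ≠ j →
        ‖g C i - g C j‖ ^ 2 = (1 - C) * ‖X i - X j‖ ^ 2 + C) ∧
      (∀ ρ : ℝ, 1 < ρ → ρ < (n : ℝ) - 1 →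
        ∀ C ∈ Set.Ico (0 : ℝ) 1, TSNE d ρ X = TSNE d ρ (g C)) :=
  g_exists_general n d X

end TSNEPaper
end
end

section
/- Fix n ≥ 2 and Y = {y_0, y_1,…,y_{n−1}} ⊂ ℝ^d. Let β := diam(Y∖{y_0}) and γ := min_{1 ≤ j ≤ n−1} ‖y_0 − y_j‖. Then the total output affinity of y_0 satisfies Σ_{i=1}^{n−1} Q_{0i}(Y) ≤ 1 / ( 2 + (n−2)·(1+γ²)/(1+β²) ). -/
open scoped BigOperators RealInnerProductSpace
noncomputable section

namespace TSNEPaper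

variable {n k : ℕ} {E F : Type*}

/-! With `w i j = (1 + ‖Y i - Y j‖²)⁻¹`, the normalizer of `Q` splits as `2 A + R`, where
`A = ∑_{i ≠ i₀} w i₀ i` is the numerator of the left-hand side and `R` sums `w` over the
`(n - 1)(n - 2)` ordered pairs avoiding `i₀`. Every `w i₀ i` is at most `(1 + γ²)⁻¹`, every term
of `R` is at least `(1 + β²)⁻¹`, and `A / (2 A + R)` increases in `A` and decreases in `R`. -/

open Finset

theorem _root_.Finset.sum_offDiag_insert {α M : Type*} [DecidableEq α] [AddCommMonoid M]
    {s : Finset α} {a : α} (ha : a ∉ s) (f : α × α → M) :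
    ∑ p ∈ (insert a s).offDiag, f p =
      ∑ p ∈ s.offDiag, f p + ∑ x ∈ s, f (a, x) + ∑ x ∈ s, f (x, a) := by
  rw [offDiag_insert ha, sum_union, sum_union, singleton_product, product_singleton, sum_map,
    sum_map]
  · rfl
  all_goals rw [disjoint_left]; grind

section OutKernel

variable [NormedAddCommGroup F] (Y : Fin n → F)

def outKernel (i j : Fin n) : ℝ := (1 + ‖Y i - Y j‖ ^ 2)⁻¹

theorem outKernel_pos (i j : Fin n) : 0 < outKernel Y i j := by
  unfold outKernel; positivity

theorem outKernel_comm (i j : Fin n) : outKernel Y i j = outKernel Y j i := by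
  rw [outKernel, outKernel, norm_sub_rev]

theorem outKernel_le {i j : Fin n} {r : ℝ} (hr : 0 ≤ r) (h : r ≤ ‖Y i - Y j‖) :
    outKernel Y i j ≤ (1 + r ^ 2)⁻¹ := by
  unfold outKernel; gcongr

theorem le_outKernel {i j : Fin n} {r : ℝ} (h : ‖Y i - Y j‖ ≤ r) :
    (1 + r ^ 2)⁻¹ ≤ outKernel Y i j := by
  unfold outKernel; gcongr

theorem outAffinity_of_ne {i j : Fin n} (h : i ≠ j) :
    outAffinity Y i j = outKernel Y i j / ∑ p ∈ univ.offDiag, outKernel Y p.1 p.2 := by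
  rw [outAffinity, if_neg h]; rfl

theorem sum_offDiag_outKernel (i0 : Fin n) :
    ∑ p ∈ univ.offDiag, outKernel Y p.1 p.2 =
      2 * ∑ i ∈ univ.erase i0, outKernel Y i0 i +
        ∑ p ∈ (univ.erase i0).offDiag, outKernel Y p.1 p.2 := by
  have h := sum_offDiag_insert (notMem_erase i0 univ) fun p => outKernel Y p.1 p.2
  rw [insert_erase (mem_univ i0)] at h
  rw [h, sum_congr rfl fun i _ => outKernel_comm Y i i0]
  ring

theorem sum_erase_outKernel_le (i0 : Fin n) :
    ∑ i ∈ univ.erase i0, outKernel Y i0 i ≤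
      (n - 1) * (1 + Metric.infDist (Y i0) (Y '' {i | i ≠ i0}) ^ 2)⁻¹ := by
  calc ∑ i ∈ univ.erase i0, outKernel Y i0 i
      ≤ ∑ _i ∈ univ.erase i0, (1 + Metric.infDist (Y i0) (Y '' {i | i ≠ i0}) ^ 2)⁻¹ :=
        sum_le_sum fun i hi => outKernel_le Y Metric.infDist_nonneg <| by
          rw [← dist_eq_norm]
          exact Metric.infDist_le_dist_of_mem ⟨i, ne_of_mem_erase hi, rfl⟩
    _ = _ := by
      rw [sum_const, card_erase_of_mem (mem_univ i0), card_univ, Fintype.card_fin, nsmul_eq_mul,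
        Nat.cast_pred i0.pos]

theorem le_sum_offDiag_outKernel (i0 : Fin n) :
    ((n : ℝ) - 1) * (n - 2) * (1 + Metric.diam (Y '' {i | i ≠ i0}) ^ 2)⁻¹ ≤
      ∑ p ∈ (univ.erase i0).offDiag, outKernel Y p.1 p.2 := by
  calc ((n : ℝ) - 1) * (n - 2) * (1 + Metric.diam (Y '' {i | i ≠ i0}) ^ 2)⁻¹
      = ∑ _p ∈ (univ.erase i0).offDiag, (1 + Metric.diam (Y '' {i | i ≠ i0}) ^ 2)⁻¹ := by
        rw [sum_const, offDiag_card, card_erase_of_mem (mem_univ i0), card_univ,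
          Fintype.card_fin, nsmul_eq_mul, Nat.cast_sub (Nat.le_mul_self _), Nat.cast_mul,
          Nat.cast_pred i0.pos]
        ring
    _ ≤ _ := sum_le_sum fun p hp => le_outKernel Y <| by
        obtain ⟨hp1, hp2, -⟩ := mem_offDiag.1 hp
        rw [← dist_eq_norm]
        exact Metric.dist_le_diam_of_mem (Set.toFinite _).isBounded
          ⟨p.1, ne_of_mem_erase hp1, rfl⟩ ⟨p.2, ne_of_mem_erase hp2, rfl⟩

end OutKernel

theorem div_two_mul_add_le_inv {A R N G B : ℝ} (hN : 2 ≤ N) (hG : 0 < G) (hB : 0 < B)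
    (hA0 : 0 ≤ A) (hA : A ≤ (N - 1) * G⁻¹) (hR : (N - 1) * (N - 2) * B⁻¹ ≤ R) :
    A / (2 * A + R) ≤ (2 + (N - 2) * G / B)⁻¹ := by
  obtain rfl | hA_pos := hA0.eq_or_lt
  · rw [zero_div]; positivity
  have hR0 : 0 ≤ R :=
    le_trans (mul_nonneg (mul_nonneg (by linarith) (by linarith)) (inv_nonneg.2 hB.le)) hR
  rw [div_le_iff₀ (by linarith), inv_mul_eq_div, le_div_iff₀ (by positivity)]
  have hAG : A * G ≤ N - 1 := by rwa [← le_div_iff₀ hG]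
  calc A * (2 + (N - 2) * G / B) = 2 * A + (A * G) * (N - 2) * B⁻¹ := by ring
    _ ≤ 2 * A + (N - 1) * (N - 2) * B⁻¹ := by gcongr
    _ ≤ 2 * A + R := by linarith

/-- Lemma `Qsum_bound`: bound on the total output affinity of a designated
point in terms of `β = diam` of the remaining points and `γ = ` the minimum distance from
the designated point to the rest. -/
theorem Qsum_bound (n d : ℕ) (hn : 2 ≤ n)
    (Y : Fin n → EuclideanSpace ℝ (Fin d)) (i0 : Fin n) (β γ : ℝ)
    (hβ : β = Metric.diam (Y '' {i : Fin n | i ≠ i0}))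
    (hγ : γ = Metric.infDist (Y i0) (Y '' {i : Fin n | i ≠ i0})) :
    ∑ i ∈ Finset.univ.erase i0, outAffinity Y i0 i ≤
      (2 + ((n : ℝ) - 2) * (1 + γ ^ 2) / (1 + β ^ 2))⁻¹ := by
  subst hβ hγ
  rw [sum_congr rfl fun i hi => outAffinity_of_ne Y (ne_of_mem_erase hi).symm, ← sum_div,
    sum_offDiag_outKernel Y i0]
  exact div_two_mul_add_le_inv (by exact_mod_cast hn) (by positivity) (by positivity)
    (sum_nonneg fun i _ => (outKernel_pos Y i0 i).le) (sum_erase_outKernel_le Y i0)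
    (le_sum_offDiag_outKernel Y i0)

end TSNEPaper
end
end

section
/- Fix n ≥ 2 and Y = {y_0, y_1,…,y_{n−1}} ⊂ ℝ^d. If Y is an (α, y_0)-outlier configuration with α = α(Y, y_0) (the largest such α), then there exists a unit vector v ∈ ℝ^d such that for every i ∈ {1,…,n−1}: ‖y_i − y_0‖ · α/√(1+α²) ≤ (y_i − y_0)·v ≤ ‖y_i − y_0‖. -/
/-!
Let `v` be the unit normal of an optimal separating hyperplane, with margin `α M` where
`M = max 1 diam(Y ∖ {y₀})`. Every displacement `x = yᵢ - y₀` deviates from the line `ℝ v` by at most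
`M`: if some `x` deviated by a vector `w` with `‖w‖ > M`, then every other displacement, lying within
`M` of `x`, would have component at least `‖w‖ - M > 0` along `w / ‖w‖`, and tilting `v` towards `w`
would raise the margin to `√((α M)² + (‖w‖ - M)²) > α M`, contradicting maximality of `α`.
Hence `α ‖x - ⟪x, v⟫ v‖ ≤ α M ≤ ⟪x, v⟫`, and Pythagoras gives `α ‖x‖ ≤ √(1 + α²) ⟪x, v⟫`.
-/

open scoped BigOperators RealInnerProductSpace
noncomputable section

namespace TSNEPaper

variable {n k : ℕ} {E F : Type*}

section OrthogonalTilt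

variable [NormedAddCommGroup F] [InnerProductSpace ℝ F]

theorem norm_sq_eq_inner_sq_add_norm_starProjection_orthogonal_sq {v : F} (hv : ‖v‖ = 1)
    (x : F) : ‖x‖ ^ 2 = ⟪x, v⟫ ^ 2 + ‖(ℝ ∙ v)ᗮ.starProjection x‖ ^ 2 := by
  rw [Submodule.norm_sq_eq_add_norm_sq_starProjection x (ℝ ∙ v),
    Submodule.starProjection_unit_singleton ℝ hv, norm_smul, hv, mul_one, Real.norm_eq_abs,
    sq_abs, real_inner_comm]

theorem exists_norm_eq_one_sqrt_le_inner {v u : F} (hv : ‖v‖ = 1) (hu : ‖u‖ = 1)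
    (hvu : ⟪v, u⟫ = 0) {a b : ℝ} (ha : 0 < a) (hb : 0 ≤ b) :
    ∃ v' : F, ‖v'‖ = 1 ∧ ∀ x : F, a ≤ ⟪x, v⟫ → b ≤ ⟪x, u⟫ → √(a ^ 2 + b ^ 2) ≤ ⟪x, v'⟫ := by
  set r := √(a ^ 2 + b ^ 2)
  have hr : 0 < r := Real.sqrt_pos.2 (by positivity)
  have hr2 : r ^ 2 = a ^ 2 + b ^ 2 := Real.sq_sqrt (by positivity)
  have hnorm : ‖a • v + b • u‖ = r := by
    have horth : ⟪a • v, b • u⟫ = 0 := by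
      rw [real_inner_smul_left, real_inner_smul_right, hvu, mul_zero, mul_zero]
    have h := norm_add_sq_eq_norm_sq_add_norm_sq_real horth
    rw [norm_smul, norm_smul, hv, hu, Real.norm_eq_abs, Real.norm_eq_abs] at h
    rw [← Real.sqrt_sq (norm_nonneg _), sq, h, mul_one, mul_one, abs_mul_abs_self,
      abs_mul_abs_self, ← sq, ← sq]
  refine ⟨r⁻¹ • (a • v + b • u), ?_, fun x hxv hxu => ?_⟩
  · rw [norm_smul, hnorm, norm_inv, Real.norm_of_nonneg hr.le, inv_mul_cancel₀ hr.ne']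
  · have h : r ^ 2 ≤ ⟪x, a • v + b • u⟫ := by
      rw [hr2, inner_add_right, real_inner_smul_right, real_inner_smul_right]
      nlinarith
    rw [real_inner_smul_right, le_inv_mul_iff₀ hr]
    linarith

theorem sub_norm_sub_le_inner_smul_inv_norm {a b : F} (hb : b ≠ 0) :
    ‖b‖ - ‖a - b‖ ≤ ⟪a, ‖b‖⁻¹ • b⟫ := by
  have hb' : 0 < ‖b‖ := norm_pos_iff.2 hb
  have hsplit : ⟪a, b⟫ = ‖b‖ ^ 2 + ⟪a - b, b⟫ := by
    rw [inner_sub_left, real_inner_self_eq_norm_sq]; ring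
  have hcs : -(‖a - b‖ * ‖b‖) ≤ ⟪a - b, b⟫ := neg_le_of_abs_le (abs_real_inner_le_norm _ _)
  rw [real_inner_smul_right, le_inv_mul_iff₀ hb']
  nlinarith

theorem norm_mul_div_sqrt_le_inner {v x : F} (hv : ‖v‖ = 1) {α : ℝ} (hα : 0 ≤ α)
    (h : α * ‖(ℝ ∙ v)ᗮ.starProjection x‖ ≤ ⟪x, v⟫) :
    ‖x‖ * (α / √(1 + α ^ 2)) ≤ ⟪x, v⟫ := by
  have hs : 0 < √(1 + α ^ 2) := Real.sqrt_pos.2 (by positivity)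
  have ht : 0 ≤ ⟪x, v⟫ := (by positivity : 0 ≤ α * _).trans h
  rw [mul_div_assoc', div_le_iff₀ hs, ← pow_le_pow_iff_left₀ (by positivity) (by positivity)
    two_ne_zero, mul_pow, mul_pow, Real.sq_sqrt (by positivity),
    norm_sq_eq_inner_sq_add_norm_starProjection_orthogonal_sq hv x]
  nlinarith [mul_self_le_mul_self (by positivity) h]

theorem norm_starProjection_orthogonal_le_of_margin_maximal {ι : Type*} {x : ι → F} {v : F}
    (hv : ‖v‖ = 1) {α M : ℝ} (hα : 0 < α) (hM : 0 < M) (hdist : ∀ i j, ‖x i - x j‖ ≤ M)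
    (hsep : ∀ i, α * M ≤ ⟪x i, v⟫)
    (hmax : ∀ α', 0 < α' → ∀ v' : F, ‖v'‖ = 1 → (∀ i, α' * M ≤ ⟪x i, v'⟫) → α' ≤ α) (i : ι) :
    ‖(ℝ ∙ v)ᗮ.starProjection (x i)‖ ≤ M := by
  set P := (ℝ ∙ v)ᗮ.starProjection
  set w := P (x i)
  by_contra! hw
  have hw0 : w ≠ 0 := norm_pos_iff.1 (hM.trans hw)
  set u := ‖w‖⁻¹ • w
  have hu : ‖u‖ = 1 := norm_smul_inv_norm hw0
  have hu_mem : u ∈ (ℝ ∙ v)ᗮ := Submodule.smul_mem _ _ (Submodule.starProjection_apply_mem _ _)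
  have hvu : ⟪v, u⟫ = 0 := Submodule.mem_orthogonal_singleton_iff_inner_right.1 hu_mem
  have hxu : ∀ j, ‖w‖ - M ≤ ⟪x j, u⟫ := by
    intro j
    have hPu : ⟪x j, u⟫ = ⟪P (x j), u⟫ := by
      rw [← sub_eq_zero, ← inner_sub_left]
      exact Submodule.starProjection_inner_eq_zero _ _ hu_mem
    have hdev : ‖P (x j) - w‖ ≤ M :=
      calc ‖P (x j) - w‖ = ‖P (x j - x i)‖ := by rw [map_sub]
        _ ≤ ‖x j - x i‖ := Submodule.norm_starProjection_apply_le _ _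
        _ ≤ M := hdist j i
    rw [hPu]
    linarith [sub_norm_sub_le_inner_smul_inv_norm (a := P (x j)) hw0]
  obtain ⟨v', hv', hv'sep⟩ := exists_norm_eq_one_sqrt_le_inner hv hu hvu
    (mul_pos hα hM) (sub_nonneg.2 hw.le)
  have hgt : α * M < √((α * M) ^ 2 + (‖w‖ - M) ^ 2) :=
    Real.lt_sqrt_of_sq_lt (by nlinarith)
  have hle := hmax (√((α * M) ^ 2 + (‖w‖ - M) ^ 2) / M) (by positivity) v' hv'
    (fun j => by rw [div_mul_cancel₀ _ hM.ne']; exact hv'sep (x j) (hsep j) (hxu j))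
  rw [div_le_iff₀ hM] at hle
  linarith

end OrthogonalTilt

theorem r_split_general (n d : ℕ)
    (Y : Fin n → EuclideanSpace ℝ (Fin d)) (i0 : Fin n) (α : ℝ)
    (hconf : IsOutlierConfig Y i0 α)
    (hmax : ∀ α' : ℝ, IsOutlierConfig Y i0 α' → α' ≤ α) :
    ∃ v : EuclideanSpace ℝ (Fin d), ‖v‖ = 1 ∧ ∀ i : Fin n, i ≠ i0 →
      ‖Y i - Y i0‖ * (α / Real.sqrt (1 + α ^ 2)) ≤ ⟪Y i - Y i0, v⟫ ∧
      ⟪Y i - Y i0, v⟫ ≤ ‖Y i - Y i0‖ := by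
  obtain ⟨hα, v, hv, hsep⟩ := hconf
  set M := max 1 (Metric.diam (Y '' {i | i ≠ i0}))
  have hM : 0 < M := one_pos.trans_le (le_max_left _ _)
  have hdist : ∀ i j : {i // i ≠ i0}, ‖(Y i - Y i0) - (Y j - Y i0)‖ ≤ M := fun i j => by
    rw [sub_sub_sub_cancel_right, ← dist_eq_norm]
    exact (Metric.dist_le_diam_of_mem (Set.toFinite _).isBounded (Set.mem_image_of_mem Y i.2)
      (Set.mem_image_of_mem Y j.2)).trans (le_max_right _ _)
  have hdev := norm_starProjection_orthogonal_le_of_margin_maximal hv hα hM hdist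
    (fun i => hsep i i.2)
    fun α' hα' v' hv' hsep' => hmax α' ⟨hα', v', hv', fun i hi => hsep' ⟨i, hi⟩⟩
  refine ⟨v, hv, fun i hi => ⟨norm_mul_div_sqrt_le_inner hv hα.le ?_, ?_⟩⟩
  · exact (mul_le_mul_of_nonneg_left (hdev ⟨i, hi⟩) hα.le).trans (hsep i hi)
  · simpa only [hv, mul_one] using real_inner_le_norm (Y i - Y i0) v

/-- Lemma `r_split`: if `Y` is an `(α, y₀)`-outlier configuration with `α`
maximal, then there is a unit direction `v` along which every displacement `y_i - y₀` has
projection between `‖y_i - y₀‖·α/√(1+α²)` and `‖y_i - y₀‖`. -/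
theorem r_split (n d : ℕ) (hn : 2 ≤ n)
    (Y : Fin n → EuclideanSpace ℝ (Fin d)) (i0 : Fin n) (α : ℝ)
    (hconf : IsOutlierConfig Y i0 α)
    (hmax : ∀ α' : ℝ, IsOutlierConfig Y i0 α' → α' ≤ α) :
    ∃ v : EuclideanSpace ℝ (Fin d), ‖v‖ = 1 ∧ ∀ i : Fin n, i ≠ i0 →
      ‖Y i - Y i0‖ * (α / Real.sqrt (1 + α ^ 2)) ≤ ⟪Y i - Y i0, v⟫ ∧
      ⟪Y i - Y i0, v⟫ ≤ ‖Y i - Y i0‖ :=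
  r_split_general n d Y i0 α hconf hmax

end TSNEPaper
end
end

section
/- Let n ≥ 4 be even, let C_1 = {1,…,n/2} and C_2 = {n/2+1,…,n}, and let X = {x_1,…,x_n} ⊂ ℝ^{n−1} be the dataset with x_i = 0 for i ∈ C_1 and x_i = e_1 for i ∈ C_2. Fix perplexity ρ ∈ (1, n−1); by symmetry all calibrated bandwidths σ_i* equal a common value σ > 0. Then: (1) the symmetrized input affinities are P_{ij} = 1/( n²/2 − n + (n²/2)·exp(−1/(2σ²)) ) if i ≠ j lie in the same cluster, and P_{ij} = exp(−1/(2σ²)) / ( n²/2 − n + (n²/2)·exp(−1/(2σ²)) ) if i, j lie in different clusters; and (2) the one-dimensional output Y = {y_1,…,y_n} ⊂ ℝ with y_i = 0 for i ∈ C_1 and y_i = √(exp(1/(2σ²)) − 1) for i ∈ C_2 satisfies Q_{ij}(Y) = P_{ij} for all i, j, hence L_X(Y) = KL(P‖Q) = 0 and Y is a global minimizer of the t-SNE loss. -/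
open scoped BigOperators RealInnerProductSpace
noncomputable section

namespace TSNEPaper

variable {n k : ℕ} {E F : Type*}

/-!
Points of a cluster coincide and the two clusters are at unit distance, so `P_{·|i}(X; σ)`
puts mass `1 / Z` on the `m - 1` other points of the cluster of `i` and `t / Z` on the `n - m`
remaining ones, where `t = exp (-1 / (2σ²))`. Its entropy is strictly increasing in `σ`, so
calibration by a positive bandwidth forces the entropy to be exactly `log₂ ρ`; this makes the
calibrated bandwidth unique, `σ_i* = σ`, and gives `P`. The output `Y` is chosen so that the
Student-t kernel `(1 + ‖y_i - y_j‖²)⁻¹` takes the same two values `1` and `t`, hence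
`Q(Y) = P(X)`, and Gibbs' inequality makes `Y` a global minimizer.
-/

open Finset

/-- Natural-log entropy of the distribution with `a` atoms of mass `1 / Z` and `b` atoms of mass
`t / Z`, where `Z = a + b t`. -/
def twoLevelEntropy (a b t : ℝ) : ℝ :=
  Real.log (a + b * t) - b * (t * Real.log t) / (a + b * t)

section TwoLevelEntropy

variable {a b : ℝ}

lemma twoLevelEntropy_one : twoLevelEntropy a b 1 = Real.log (a + b) := by
  simp [twoLevelEntropy]

lemma continuousOn_twoLevelEntropy (ha : 0 < a) (hb : 0 ≤ b) :
    ContinuousOn (twoLevelEntropy a b) (Set.Icc 0 1) := by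
  have hZ : ∀ t ∈ Set.Icc (0 : ℝ) 1, a + b * t ≠ 0 := fun t ht => by nlinarith [ht.1]
  exact (Real.continuousOn_log.comp (by fun_prop) hZ).sub
    ((continuous_const.mul Real.continuous_mul_log).continuousOn.div (by fun_prop) hZ)

lemma hasDerivAt_twoLevelEntropy {t : ℝ} (ht : 0 < t) (hZ : a + b * t ≠ 0) :
    HasDerivAt (twoLevelEntropy a b) (a * b * -Real.log t / (a + b * t) ^ 2) t := by
  have hlin : HasDerivAt (fun s => a + b * s) b t := by
    simpa using ((hasDerivAt_id t).const_mul b).const_add a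
  have hent := (hlin.log hZ).sub (((Real.hasDerivAt_mul_log ht.ne').const_mul b).div hlin hZ)
  refine hent.congr_deriv ?_
  field_simp
  ring

lemma strictMonoOn_twoLevelEntropy (ha : 0 < a) (hb : 0 < b) :
    StrictMonoOn (twoLevelEntropy a b) (Set.Icc 0 1) := by
  refine strictMonoOn_of_deriv_pos (convex_Icc 0 1) (continuousOn_twoLevelEntropy ha hb.le)
    fun t ht => ?_
  rw [interior_Icc] at ht
  have hZ : 0 < a + b * t := by nlinarith [ht.1]
  rw [(hasDerivAt_twoLevelEntropy ht.1 hZ.ne').deriv]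
  have hlog : 0 < -Real.log t := neg_pos.2 (Real.log_neg ht.1 ht.2)
  positivity

end TwoLevelEntropy

/-- The Gaussian kernel weight `exp (-1 / (2 σ²))` of a point at unit distance, extended by its
limit `0` at `σ = 0` (the literal formula would give `exp 0 = 1` there, since `1 / 0 = 0`). -/
def gaussWeight (σ : ℝ) : ℝ :=
  if σ = 0 then 0 else Real.exp (-1 / (2 * σ ^ 2))

lemma gaussWeight_zero : gaussWeight 0 = 0 := if_pos rfl

lemma gaussWeight_of_ne_zero {σ : ℝ} (hσ : σ ≠ 0) :
    gaussWeight σ = Real.exp (-1 / (2 * σ ^ 2)) := if_neg hσ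

lemma gaussWeight_mem_Ico (σ : ℝ) : gaussWeight σ ∈ Set.Ico 0 1 := by
  rcases eq_or_ne σ 0 with rfl | hσ
  · simp [gaussWeight]
  · rw [gaussWeight_of_ne_zero hσ]
    exact ⟨(Real.exp_pos _).le,
      Real.exp_lt_one_iff.2 (div_neg_of_neg_of_pos (by norm_num) (by positivity))⟩

lemma strictMonoOn_gaussWeight : StrictMonoOn gaussWeight (Set.Ici 0) := by
  intro σ hσ τ _ hστ
  have hτ : τ ≠ 0 := (lt_of_le_of_lt hσ hστ).ne'
  rw [gaussWeight_of_ne_zero hτ]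
  rcases eq_or_ne σ 0 with rfl | hσ0
  · rw [gaussWeight_zero]
    exact Real.exp_pos _
  · have hσpos : 0 < σ := lt_of_le_of_ne hσ (Ne.symm hσ0)
    rw [gaussWeight_of_ne_zero hσ0, Real.exp_lt_exp, neg_div, neg_div, neg_lt_neg_iff]
    exact one_div_lt_one_div_of_lt (by positivity) (by gcongr)

lemma surjOn_gaussWeight : Set.SurjOn gaussWeight (Set.Ioi 0) (Set.Ioo 0 1) := by
  intro t ⟨ht0, ht1⟩
  have hlog : 0 < -2 * Real.log t := by linarith [Real.log_neg ht0 ht1]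
  refine ⟨Real.sqrt (1 / (-2 * Real.log t)), Real.sqrt_pos.2 (by positivity), ?_⟩
  rw [gaussWeight_of_ne_zero (Real.sqrt_pos.2 (by positivity)).ne', Real.sq_sqrt (by positivity)]
  have : -1 / (2 * (1 / (-2 * Real.log t))) = Real.log t := by field_simp
  rw [this, Real.exp_log ht0]

lemma inv_one_add_sq_sqrt_eq_gaussWeight {σ : ℝ} (hσ : σ ≠ 0) :
    (1 + Real.sqrt (Real.exp (1 / (2 * σ ^ 2)) - 1) ^ 2)⁻¹ = gaussWeight σ := by
  rw [Real.sq_sqrt (sub_nonneg.2 (Real.one_le_exp (by positivity))), add_sub_cancel,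
    gaussWeight_of_ne_zero hσ, neg_div, Real.exp_neg]

section Calibration

variable {a b : ℝ}

lemma strictMonoOn_twoLevelEntropy_gaussWeight (ha : 0 < a) (hb : 0 < b) :
    StrictMonoOn (fun σ => twoLevelEntropy a b (gaussWeight σ)) (Set.Ici 0) :=
  (strictMonoOn_twoLevelEntropy ha hb).comp strictMonoOn_gaussWeight
    fun σ _ => Set.Ico_subset_Icc_self (gaussWeight_mem_Ico σ)

/-- A positive minimizer beats `σ = 0`, so `L` lies strictly between the entropy at `σ = 0` and
its supremum `log (a + b)`; the intermediate value theorem then gives a bandwidth with zero gap. -/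
lemma twoLevelEntropy_gaussWeight_eq_of_isMinOn (ha : 0 < a) (hb : 0 < b) {L σ : ℝ}
    (hL : L < Real.log (a + b)) (hσ : 0 < σ)
    (hmin : IsMinOn (fun s => |twoLevelEntropy a b (gaussWeight s) - L|) (Set.Ici 0) σ) :
    twoLevelEntropy a b (gaussWeight σ) = L := by
  have hgap_le : ∀ s, 0 ≤ s →
      |twoLevelEntropy a b (gaussWeight σ) - L| ≤ |twoLevelEntropy a b (gaussWeight s) - L| :=
    fun s hs => isMinOn_iff.1 hmin s hs
  have hlt_zero : twoLevelEntropy a b 0 < twoLevelEntropy a b (gaussWeight σ) := by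
    simpa [gaussWeight_zero] using
      strictMonoOn_twoLevelEntropy_gaussWeight ha hb (Set.mem_Ici.2 le_rfl) hσ.le hσ
  have hlow : twoLevelEntropy a b 0 < L := by
    by_contra! h
    have := hgap_le 0 le_rfl
    rw [gaussWeight_zero, abs_of_nonneg (by linarith), abs_of_nonneg (by linarith)] at this
    linarith
  obtain ⟨t, ht, hLt⟩ := intermediate_value_Ioo zero_le_one
    (continuousOn_twoLevelEntropy ha hb.le) ⟨hlow, twoLevelEntropy_one (a := a) ▸ hL⟩
  obtain ⟨σ₀, hσ₀, rfl⟩ := surjOn_gaussWeight ht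
  have := hgap_le σ₀ (le_of_lt hσ₀)
  rw [hLt, sub_self, abs_zero] at this
  exact sub_eq_zero.1 (abs_nonpos_iff.1 this)

end Calibration

lemma sub_le_mul_log_div {p q : ℝ} (hp : 0 ≤ p) (hq : 0 < q) :
    p - q ≤ p * Real.log (p / q) := by
  rcases hp.eq_or_lt with rfl | hp
  · simpa using hq.le
  · have := Real.one_sub_inv_le_log_of_pos (div_pos hp hq)
    rw [inv_div] at this
    calc p - q = p * (1 - q / p) := by field_simp
      _ ≤ p * Real.log (p / q) := by gcongr

section Loss

variable {n : ℕ}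

lemma outAffinity_nonneg {F : Type*} [NormedAddCommGroup F] (Y : Fin n → F) (i j : Fin n) :
    0 ≤ outAffinity Y i j := by
  unfold outAffinity
  split_ifs
  · exact le_rfl
  · exact div_nonneg (by positivity) (sum_nonneg fun _ _ => by positivity)

lemma outAffinity_pos {F : Type*} [NormedAddCommGroup F] (Y : Fin n → F) {i j : Fin n}
    (hij : i ≠ j) : 0 < outAffinity Y i j := by
  rw [outAffinity, if_neg hij]
  exact div_pos (by positivity) (sum_pos (fun _ _ => by positivity) ⟨(i, j), by simp [hij]⟩)

lemma sum_outAffinity {F : Type*} [NormedAddCommGroup F] (Y : Fin n → F)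
    (hn : (univ.offDiag : Finset (Fin n × Fin n)).Nonempty) :
    ∑ p ∈ univ.offDiag, outAffinity Y p.1 p.2 = 1 := by
  have hden : 0 < ∑ p ∈ univ.offDiag, (1 + ‖Y p.1 - Y p.2‖ ^ 2)⁻¹ :=
    sum_pos (fun _ _ => by positivity) hn
  rw [sum_congr rfl fun p hp => by rw [outAffinity, if_neg (mem_offDiag.1 hp).2.2],
    ← sum_div, div_self hden.ne']

variable {E : Type*} [NormedAddCommGroup E] {X : Fin n → E} {ρ : ℝ}

lemma tsneLoss_eq_zero {d : ℕ} {Y : Fin n → EuclideanSpace ℝ (Fin d)}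
    (hQ : ∀ i j, outAffinity Y i j = inAffinity X ρ i j) : tsneLoss X ρ Y = 0 :=
  sum_eq_zero fun p _ => by
    rw [hQ]
    rcases eq_or_ne (inAffinity X ρ p.1 p.2) 0 with h | h
    · rw [h, zero_mul]
    · rw [div_self h, Real.log_one, mul_zero]

lemma tsneLoss_nonneg (hP : ∀ i j, 0 ≤ inAffinity X ρ i j)
    (hsum : ∑ p ∈ univ.offDiag, inAffinity X ρ p.1 p.2 = 1) {d : ℕ}
    (Y : Fin n → EuclideanSpace ℝ (Fin d)) : 0 ≤ tsneLoss X ρ Y := by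
  have hn : (univ.offDiag : Finset (Fin n × Fin n)).Nonempty :=
    nonempty_of_sum_ne_zero (hsum ▸ one_ne_zero)
  calc (0 : ℝ) = ∑ p ∈ univ.offDiag, (inAffinity X ρ p.1 p.2 - outAffinity Y p.1 p.2) := by
        rw [sum_sub_distrib, hsum, sum_outAffinity Y hn, sub_self]
    _ ≤ tsneLoss X ρ Y := sum_le_sum fun p hp =>
        sub_le_mul_log_div (hP _ _) (outAffinity_pos Y (mem_offDiag.1 hp).2.2)

lemma tsneLoss_le_of_outAffinity_eq (hn : 1 < n) {d d' : ℕ}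
    {Y : Fin n → EuclideanSpace ℝ (Fin d)} (hQ : ∀ i j, outAffinity Y i j = inAffinity X ρ i j)
    (Y' : Fin n → EuclideanSpace ℝ (Fin d')) : tsneLoss X ρ Y ≤ tsneLoss X ρ Y' := by
  rw [tsneLoss_eq_zero hQ]
  refine tsneLoss_nonneg (fun i j => hQ i j ▸ outAffinity_nonneg Y i j) ?_ Y'
  simp_rw [← hQ]
  exact sum_outAffinity Y ⟨(⟨0, by omega⟩, ⟨1, hn⟩), by simp [Fin.ext_iff]⟩

end Loss

lemma sum_offDiag_eq_sum_sum_erase {α M : Type*} [Fintype α] [DecidableEq α] [AddCommMonoid M]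
    (f : α × α → M) : ∑ p ∈ univ.offDiag, f p = ∑ i, ∑ j ∈ univ.erase i, f (i, j) :=
  sum_finset_product _ _ _ fun p => by simp [ne_comm]

section UnitDistanceClusters

variable {E : Type*} [DecidableEq E] {n m : ℕ} {X : Fin n → E}

lemma sum_erase_ite_eq (hm : ∀ i, #{j | X i = X j} = m) (i : Fin n) (u v : ℝ) :
    ∑ j ∈ univ.erase i, (if X i = X j then u else v) =
      ((m : ℝ) - 1) * u + ((n : ℝ) - m) * v := by
  have hi : i ∈ ({j | X i = X j} : Finset (Fin n)) := by simp
  have hsame : #{j ∈ univ.erase i | X i = X j} + 1 = m := by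
    rw [filter_erase, card_erase_add_one hi, hm]
  have hother : #{j ∈ univ.erase i | ¬X i = X j} + m = n := by
    rw [filter_erase, erase_eq_of_notMem (by simp), ← hm, add_comm,
      card_filter_add_card_filter_not, card_univ, Fintype.card_fin]
  rw [sum_ite, sum_const, sum_const, nsmul_eq_mul, nsmul_eq_mul]
  congr 2
  · linarith [(by exact_mod_cast hsame : (#{j ∈ univ.erase i | X i = X j} : ℝ) + 1 = m)]
  · linarith [(by exact_mod_cast hother : (#{j ∈ univ.erase i | ¬X i = X j} : ℝ) + m = n)]

lemma outAffinity_eq {F : Type*} [NormedAddCommGroup F] {Y : Fin n → F} {w : ℝ}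
    (hm : ∀ i, #{j | X i = X j} = m)
    (hY : ∀ i j, (1 + ‖Y i - Y j‖ ^ 2)⁻¹ = if X i = X j then 1 else w) {i j : Fin n}
    (hij : i ≠ j) :
    outAffinity Y i j =
      (if X i = X j then 1 else w) / (n * (((m : ℝ) - 1) + ((n : ℝ) - m) * w)) := by
  simp only [outAffinity, if_neg hij, sum_offDiag_eq_sum_sum_erase, hY, sum_erase_ite_eq hm,
    mul_one, sum_const, card_univ, Fintype.card_fin, nsmul_eq_mul]

variable [NormedAddCommGroup E]

lemma sum_erase_exp_eq (hX : ∀ i j, X i ≠ X j → ‖X i - X j‖ = 1)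
    (hm : ∀ i, #{j | X i = X j} = m) (σ : ℝ) (i : Fin n) :
    ∑ j ∈ univ.erase i, Real.exp (-‖X i - X j‖ ^ 2 / (2 * σ ^ 2)) =
      ((m : ℝ) - 1) + ((n : ℝ) - m) * Real.exp (-1 / (2 * σ ^ 2)) := by
  have hterm : ∀ j, Real.exp (-‖X i - X j‖ ^ 2 / (2 * σ ^ 2)) =
      if X i = X j then 1 else Real.exp (-1 / (2 * σ ^ 2)) := by
    intro j
    split_ifs with h
    · simp [h]
    · simp [hX i j h]
  simp only [hterm, sum_erase_ite_eq hm, mul_one]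

lemma nearestSet_eq (hX : ∀ i j, X i ≠ X j → ‖X i - X j‖ = 1)
    (hm : ∀ i, #{j | X i = X j} = m) (hm2 : 2 ≤ m) (i : Fin n) :
    nearestSet X i = {j ∈ univ.erase i | X i = X j} := by
  obtain ⟨k, hk, hki⟩ := exists_mem_ne (s := {j | X i = X j}) (by rw [hm]; omega) i
  rw [mem_filter] at hk
  refine filter_congr fun j hj => ⟨fun hnear => ?_, fun hij l _ => ?_⟩
  · by_contra hij
    have := hnear k (mem_erase.2 ⟨hki, mem_univ k⟩)
    rw [hX i j hij, ← hk.2, sub_self, norm_zero] at this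
    linarith
  · rw [← hij, sub_self, norm_zero]
    exact norm_nonneg _

lemma condAffinity_eq (hX : ∀ i j, X i ≠ X j → ‖X i - X j‖ = 1)
    (hm : ∀ i, #{j | X i = X j} = m) (hm2 : 2 ≤ m) (σ : ℝ) {i j : Fin n} (hji : j ≠ i) :
    condAffinity X σ i j = (if X i = X j then 1 else gaussWeight σ) /
      (((m : ℝ) - 1) + ((n : ℝ) - m) * gaussWeight σ) := by
  rw [condAffinity, if_neg hji]
  rcases eq_or_ne σ 0 with rfl | hσ
  · have hnear := nearestSet_eq hX hm hm2 i
    have hcard : (#(nearestSet X i) : ℝ) = m - 1 := by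
      rw [hnear, filter_erase, eq_sub_iff_add_eq]
      exact_mod_cast (card_erase_add_one (by simp)).trans (hm i)
    have hmem : j ∈ nearestSet X i ↔ X i = X j := by simp [hnear, hji]
    simp only [if_true, hmem, hcard, gaussWeight_zero, mul_zero, add_zero]
    split_ifs <;> simp
  · rw [if_neg hσ, sum_erase_exp_eq hX hm, gaussWeight_of_ne_zero hσ]
    split_ifs with h
    · simp [h]
    · simp [hX i j h]

lemma entropy2_condAffinity_s19 (hX : ∀ i j, X i ≠ X j → ‖X i - X j‖ = 1)
    (hm : ∀ i, #{j | X i = X j} = m) (hm2 : 2 ≤ m) (σ : ℝ) (i : Fin n) :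
    entropy2 (condAffinity X σ i) =
      twoLevelEntropy ((m : ℝ) - 1) ((n : ℝ) - m) (gaussWeight σ) / Real.log 2 := by
  set t := gaussWeight σ
  set Z := ((m : ℝ) - 1) + ((n : ℝ) - m) * t with hZ
  have hterm : ∀ j ∈ univ.erase i, condAffinity X σ i j * Real.logb 2 (condAffinity X σ i j) =
      if X i = X j then 1 / Z * Real.logb 2 (1 / Z) else t / Z * Real.logb 2 (t / Z) := by
    intro j hj
    rw [condAffinity_eq hX hm hm2 σ (ne_of_mem_erase hj)]
    split_ifs <;> rfl
  rw [entropy2, ← sum_erase univ (a := i) (by simp [condAffinity]), sum_congr rfl hterm,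
    sum_erase_ite_eq hm]
  have hmn : (m : ℝ) ≤ n := by
    exact_mod_cast (hm i).symm.trans_le ((card_le_univ _).trans (Fintype.card_fin n).le)
  have hZpos : 0 < Z := by
    have : (2 : ℝ) ≤ m := by exact_mod_cast hm2
    nlinarith [(gaussWeight_mem_Ico σ).1]
  rw [twoLevelEntropy, ← hZ]
  rcases eq_or_ne t 0 with ht | ht
  · have hZt : Z = (m : ℝ) - 1 := by rw [hZ, ht, mul_zero, add_zero]
    simp only [ht, zero_div, zero_mul, mul_zero, add_zero, sub_zero, Real.logb, one_div,
      Real.log_inv]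
    rw [← hZt]
    field_simp
  · simp only [Real.logb, one_div, Real.log_inv, Real.log_div ht hZpos.ne']
    field_simp
    ring

lemma isCalibrated_iff (hX : ∀ i j, X i ≠ X j → ‖X i - X j‖ = 1)
    (hm : ∀ i, #{j | X i = X j} = m) (hm2 : 2 ≤ m) {ρ σ : ℝ} (i : Fin n) :
    IsCalibrated X ρ i σ ↔ 0 ≤ σ ∧ IsMinOn
      (fun s => |twoLevelEntropy ((m : ℝ) - 1) ((n : ℝ) - m) (gaussWeight s) - Real.log ρ|)
      (Set.Ici 0) σ := by
  have hlog2 : 0 < Real.log 2 := Real.log_pos one_lt_two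
  have hgap : ∀ s, |entropy2 (condAffinity X s i) - Real.logb 2 ρ| =
      |twoLevelEntropy ((m : ℝ) - 1) ((n : ℝ) - m) (gaussWeight s) - Real.log ρ| /
        Real.log 2 := fun s => by
    rw [entropy2_condAffinity_s19 hX hm hm2, Real.logb, ← sub_div, abs_div, abs_of_pos hlog2]
  simp only [IsCalibrated, hgap, div_le_div_iff_of_pos_right hlog2, isMinOn_iff, Set.mem_Ici]

lemma sigmaStar_eq (hX : ∀ i j, X i ≠ X j → ‖X i - X j‖ = 1)
    (hm : ∀ i, #{j | X i = X j} = m) (hm2 : 2 ≤ m) (hmn : m < n) {ρ σ : ℝ} (hρ : 0 < ρ)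
    (hρn : ρ < n - 1) (hσ : 0 < σ) {i : Fin n} (hcal : IsCalibrated X ρ i σ) :
    sigmaStar X ρ i = σ := by
  have ha : (0 : ℝ) < m - 1 := by
    have : (2 : ℝ) ≤ m := by exact_mod_cast hm2
    linarith
  have hb : (0 : ℝ) < n - m := sub_pos.2 (by exact_mod_cast hmn)
  have hL : Real.log ρ < Real.log ((m - 1) + (n - m)) := by
    rw [show (m : ℝ) - 1 + (n - m) = n - 1 by ring]
    exact Real.log_lt_log hρ hρn
  have hσL := twoLevelEntropy_gaussWeight_eq_of_isMinOn ha hb hL hσ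
    ((isCalibrated_iff hX hm hm2 i).1 hcal).2
  obtain ⟨hstar, hstar_min⟩ := (isCalibrated_iff hX hm hm2 i).1
    (Classical.epsilon_spec ⟨σ, hcal⟩ : IsCalibrated X ρ i (sigmaStar X ρ i))
  have hstarL := isMinOn_iff.1 hstar_min σ hσ.le
  simp only [hσL, sub_self, abs_zero, abs_nonpos_iff, sub_eq_zero] at hstarL
  exact (strictMonoOn_twoLevelEntropy_gaussWeight ha hb).injOn hstar hσ.le
    (hstarL.trans hσL.symm)

lemma inAffinity_eq (hX : ∀ i j, X i ≠ X j → ‖X i - X j‖ = 1)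
    (hm : ∀ i, #{j | X i = X j} = m) (hm2 : 2 ≤ m) {ρ σ : ℝ}
    (hσ : ∀ i, sigmaStar X ρ i = σ) {i j : Fin n} (hij : i ≠ j) :
    inAffinity X ρ i j = (if X i = X j then 1 else gaussWeight σ) /
      (n * (((m : ℝ) - 1) + ((n : ℝ) - m) * gaussWeight σ)) := by
  rw [inAffinity, if_neg hij, hσ, hσ, condAffinity_eq hX hm hm2 σ hij,
    condAffinity_eq hX hm hm2 σ (Ne.symm hij)]
  simp only [eq_comm (a := X j)]
  rw [mul_comm (n : ℝ), ← div_div, ← div_div, add_self_div_two]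

lemma outAffinity_eq_inAffinity (hX : ∀ i j, X i ≠ X j → ‖X i - X j‖ = 1)
    (hm : ∀ i, #{j | X i = X j} = m) (hm2 : 2 ≤ m) {F : Type*} [NormedAddCommGroup F]
    {Y : Fin n → F} {ρ σ : ℝ} (hσ : ∀ i, sigmaStar X ρ i = σ)
    (hY : ∀ i j, (1 + ‖Y i - Y j‖ ^ 2)⁻¹ = if X i = X j then 1 else gaussWeight σ)
    (i j : Fin n) :
    outAffinity Y i j = inAffinity X ρ i j := by
  rcases eq_or_ne i j with rfl | hij
  · simp [outAffinity, inAffinity]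
  · rw [outAffinity_eq hm hY hij, inAffinity_eq hX hm hm2 hσ hij]

end UnitDistanceClusters

lemma norm_sub_of_eq_ite {ι F : Type*} [NormedAddCommGroup F] {c : ι → Prop} [DecidablePred c]
    {u v : F} {Z : ι → F} (hZ : ∀ i, Z i = if c i then u else v) (i j : ι) :
    ‖Z i - Z j‖ = if (c i ↔ c j) then 0 else ‖u - v‖ := by
  rw [hZ, hZ]
  by_cases hi : c i <;> by_cases hj : c j <;> simp [hi, hj, norm_sub_rev]

lemma eq_iff_of_eq_ite {ι F : Type*} [NormedAddCommGroup F] {c : ι → Prop} [DecidablePred c]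
    {u v : F} (huv : u ≠ v) {Z : ι → F} (hZ : ∀ i, Z i = if c i then u else v) (i j : ι) :
    Z i = Z j ↔ (c i ↔ c j) := by
  rw [← sub_eq_zero, ← norm_eq_zero, norm_sub_of_eq_ite hZ]
  split_ifs with h <;> simp [h, sub_eq_zero, huv]

lemma card_filter_iff_lt_div_two {n : ℕ} (hn : Even n) (i : Fin n) :
    #{j : Fin n | ((i : ℕ) < n / 2 ↔ (j : ℕ) < n / 2)} = n / 2 := by
  have hlow : #{j : Fin n | (j : ℕ) < n / 2} = n / 2 := by
    rw [Fin.card_filter_val_lt]; omega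
  by_cases hi : (i : ℕ) < n / 2
  · simpa [hi] using hlow
  · have := card_filter_add_card_filter_not (s := (univ : Finset (Fin n)))
      (fun j => (j : ℕ) < n / 2)
    rw [hlow, card_univ, Fintype.card_fin] at this
    simp only [hi, false_iff]
    obtain ⟨k, rfl⟩ := hn
    omega

/-- explicit two-cluster example. For the dataset with one cluster at `0` and
one at `e₁`, the symmetrized input affinities have the stated closed form, and the explicit
one-dimensional output `Y` satisfies `Q(Y) = P(X)`, has zero loss, and is a global
minimizer of the t-SNE loss. -/
theorem two_cluster_example (n : ℕ) (hn : 4 ≤ n) (heven : Even n)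
    (X : Fin n → EuclideanSpace ℝ (Fin (n - 1)))
    (hX : ∀ i : Fin n, X i = if (i : ℕ) < n / 2 then 0
      else EuclideanSpace.single (⟨0, by omega⟩ : Fin (n - 1)) (1 : ℝ))
    (ρ : ℝ) (hρ : 1 < ρ) (hρ' : ρ < (n : ℝ) - 1)
    (σ : ℝ) (hσpos : 0 < σ) (hσ : ∀ i : Fin n, IsCalibrated X ρ i σ)
    (Y : Fin n → EuclideanSpace ℝ (Fin 1))
    (hY : ∀ i : Fin n, Y i = if (i : ℕ) < n / 2 then 0
      else EuclideanSpace.single 0 (Real.sqrt (Real.exp (1 / (2 * σ ^ 2)) - 1))) :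
    (∀ i j : Fin n, i ≠ j → (((i : ℕ) < n / 2) ↔ ((j : ℕ) < n / 2)) →
      inAffinity X ρ i j =
        ((n : ℝ) ^ 2 / 2 - n + (n : ℝ) ^ 2 / 2 * Real.exp (-1 / (2 * σ ^ 2)))⁻¹) ∧
    (∀ i j : Fin n, ¬(((i : ℕ) < n / 2) ↔ ((j : ℕ) < n / 2)) →
      inAffinity X ρ i j =
        Real.exp (-1 / (2 * σ ^ 2)) /
          ((n : ℝ) ^ 2 / 2 - n + (n : ℝ) ^ 2 / 2 * Real.exp (-1 / (2 * σ ^ 2)))) ∧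
    (∀ i j : Fin n, outAffinity Y i j = inAffinity X ρ i j) ∧
    tsneLoss X ρ Y = 0 ∧
    (∀ Y' : Fin n → EuclideanSpace ℝ (Fin 1), tsneLoss X ρ Y ≤ tsneLoss X ρ Y') := by
  classical
  have hXeq : ∀ i j, X i = X j ↔ ((i : ℕ) < n / 2 ↔ (j : ℕ) < n / 2) :=
    eq_iff_of_eq_ite (by rw [ne_comm, ← norm_ne_zero_iff, PiLp.norm_single]; simp) hX
  have hXdist : ∀ i j, X i ≠ X j → ‖X i - X j‖ = 1 := fun i j h => by
    simp [norm_sub_of_eq_ite hX, (hXeq i j).not.1 h]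
  have hm : ∀ i, #{j | X i = X j} = n / 2 := fun i => by
    simpa only [hXeq] using card_filter_iff_lt_div_two heven i
  have hstar : ∀ i, sigmaStar X ρ i = σ := fun i =>
    sigmaStar_eq hXdist hm (by omega) (by omega) (by linarith) hρ' hσpos (hσ i)
  have hw : gaussWeight σ = Real.exp (-1 / (2 * σ ^ 2)) := gaussWeight_of_ne_zero hσpos.ne'
  have hYw : ∀ i j, (1 + ‖Y i - Y j‖ ^ 2)⁻¹ = if X i = X j then 1 else gaussWeight σ :=
    fun i j => by
      simp only [norm_sub_of_eq_ite hY, hXeq]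
      split_ifs
      · simp
      · simp only [zero_sub, norm_neg, PiLp.norm_single, Real.norm_eq_abs, sq_abs,
          inv_one_add_sq_sqrt_eq_gaussWeight hσpos.ne']
  have hQ := outAffinity_eq_inAffinity hXdist hm (by omega) hstar hYw
  have hden : (n : ℝ) * (((n / 2 : ℕ) : ℝ) - 1 + (n - (n / 2 : ℕ)) * gaussWeight σ) =
      (n : ℝ) ^ 2 / 2 - n + (n : ℝ) ^ 2 / 2 * Real.exp (-1 / (2 * σ ^ 2)) := by
    rw [Nat.cast_div_charZero heven.two_dvd, hw]
    push_cast
    ring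
  refine ⟨fun i j hij hsame => ?_, fun i j hcross => ?_, hQ, tsneLoss_eq_zero hQ,
    tsneLoss_le_of_outAffinity_eq (by omega) hQ⟩
  · rw [inAffinity_eq hXdist hm (by omega) hstar hij, if_pos ((hXeq i j).2 hsame), hden, one_div]
  · rw [inAffinity_eq hXdist hm (by omega) hstar (by rintro rfl; exact hcross Iff.rfl),
      if_neg (mt (hXeq i j).1 hcross), hden, hw]

end TSNEPaper
end
end
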